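/- arXiv:2301.08181 — 10 statements merged into one kernel-verified Lean document; each statement's English description precedes it below -/
import Mathlib

section
/- Let A be a nonnegative matrix with entrywise positive left and right eigenvectors u' and v' for some eigenvalue λ. Then λ equals the Perron eigenvalue r of A (the nonnegative eigenvalue of maximal modulus). -/
open Matrix Finset

/-
Pair the two eigenvector conditions against each other. Since `u` is a positive left eigenvector
for `λ`, every nonnegative `a ≠ 0` with `c • a ≤ A *ᵥ a` forces `c ≤ λ`: apply `u` to both
sides. For a complex eigenvector `w` of `A` for `μ`, the triangle inequality gives
`‖μ‖ • |w| ≤ A *ᵥ |w|`, so every eigenvalue has modulus at most `λ`; in particular `r ≤ λ`.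
Conversely `λ` is itself an eigenvalue (with eigenvector `v`), so `λ ≤ |λ| ≤ r`.
-/

theorem Matrix.isRoot_charpoly_iff_exists_mulVec_eq_smul {ι K : Type*} [Fintype ι]
    [DecidableEq ι] [Field K] (A : Matrix ι ι K) (μ : K) :
    A.charpoly.IsRoot μ ↔ ∃ w : ι → K, w ≠ 0 ∧ A *ᵥ w = μ • w := by
  rw [← Matrix.mem_spectrum_iff_isRoot_charpoly, ← spectrum_toLin',
    ← Module.End.hasEigenvalue_iff_mem_spectrum, Module.End.hasEigenvalue_iff]
  simp only [Submodule.ne_bot_iff, Module.End.mem_eigenspace_iff, toLin'_apply]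
  grind

variable {ι : Type*} [Fintype ι]

theorem le_of_smul_le_mulVec_of_vecMul_eq_smul {R : Type*} [Field R] [LinearOrder R]
    [IsStrictOrderedRing R] {A : Matrix ι ι R} {u a : ι → R} {c lam : R}
    (hu : ∀ i, 0 < u i) (huA : u ᵥ* A = lam • u) (ha : 0 ≤ a) (ha0 : a ≠ 0)
    (hca : c • a ≤ A *ᵥ a) : c ≤ lam := by
  have hua : 0 < u ⬝ᵥ a := by
    obtain ⟨j, hj⟩ := Function.ne_iff.1 ha0
    exact Finset.sum_pos' (fun i _ => mul_nonneg (hu i).le (ha i))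
      ⟨j, mem_univ j, mul_pos (hu j) (lt_of_le_of_ne (ha j) (Ne.symm hj))⟩
  refine le_of_mul_le_mul_right ?_ hua
  calc c * (u ⬝ᵥ a) = u ⬝ᵥ (c • a) := by rw [dotProduct_smul, smul_eq_mul]
    _ ≤ u ⬝ᵥ (A *ᵥ a) := dotProduct_le_dotProduct_of_nonneg_left hca fun i => (hu i).le
    _ = lam * (u ⬝ᵥ a) := by rw [dotProduct_mulVec, huA, smul_dotProduct, smul_eq_mul]

theorem norm_smul_norm_le_mulVec_norm {A : Matrix ι ι ℝ} (hA : ∀ i j, 0 ≤ A i j) {μ : ℂ}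
    {w : ι → ℂ} (hAw : A.map (algebraMap ℝ ℂ) *ᵥ w = μ • w) :
    ‖μ‖ • (fun i => ‖w i‖) ≤ A *ᵥ fun i => ‖w i‖ := fun i =>
  calc ‖μ‖ * ‖w i‖ = ‖∑ j, (A i j : ℂ) * w j‖ := by
        rw [← norm_mul, ← smul_eq_mul, ← Pi.smul_apply, ← hAw]
        rfl
    _ ≤ ∑ j, ‖(A i j : ℂ) * w j‖ := norm_sum_le _ _
    _ = ∑ j, A i j * ‖w j‖ := by
        simp only [norm_mul, Complex.norm_real, Real.norm_of_nonneg (hA i _)]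

theorem norm_le_of_nonneg_of_vecMul_eq_smul {A : Matrix ι ι ℝ} (hA : ∀ i j, 0 ≤ A i j)
    {u : ι → ℝ} {lam : ℝ} (hu : ∀ i, 0 < u i) (huA : u ᵥ* A = lam • u) {μ : ℂ}
    {w : ι → ℂ} (hw : w ≠ 0) (hAw : A.map (algebraMap ℝ ℂ) *ᵥ w = μ • w) : ‖μ‖ ≤ lam :=
  le_of_smul_le_mulVec_of_vecMul_eq_smul hu huA (fun i => norm_nonneg (w i))
    (fun h => hw (funext fun i => norm_eq_zero.1 (congrFun h i)))
    (norm_smul_norm_le_mulVec_norm hA hAw)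

theorem stmt_2_general {n : ℕ} (A : Matrix (Fin n) (Fin n) ℝ)
    (hA : ∀ i j, 0 ≤ A i j)
    (lam r : ℝ) (u v : Fin n → ℝ) (hu : ∀ i, 0 < u i) (hv : ∀ i, 0 < v i)
    (hAv : A.mulVec v = lam • v) (huA : A.vecMul u = lam • u)
    (hr_eig : ((A.map (algebraMap ℝ ℂ)).charpoly).IsRoot (r : ℂ))
    (hr_max : ∀ μ : ℂ, ((A.map (algebraMap ℝ ℂ)).charpoly).IsRoot μ → ‖μ‖ ≤ r) :
    lam = r := by
  obtain ⟨w, hw, hAw⟩ := (isRoot_charpoly_iff_exists_mulVec_eq_smul _ _).1 hr_eig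
  have hr_le : r ≤ lam := calc
    r ≤ ‖(r : ℂ)‖ := by rw [Complex.norm_real]; exact Real.le_norm_self r
    _ ≤ lam := norm_le_of_nonneg_of_vecMul_eq_smul hA hu huA hw hAw
  have hlam_root : ((A.map (algebraMap ℝ ℂ)).charpoly).IsRoot (lam : ℂ) := by
    obtain ⟨j, -⟩ := Function.ne_iff.1 hw
    refine (isRoot_charpoly_iff_exists_mulVec_eq_smul _ _).2
      ⟨algebraMap ℝ ℂ ∘ v, fun h => (hv j).ne' (by simpa using congrFun h j), funext fun i => ?_⟩
    rw [← RingHom.map_mulVec, hAv]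
    simp
  have hlam_le : lam ≤ r := calc
    lam ≤ ‖(lam : ℂ)‖ := by rw [Complex.norm_real]; exact Real.le_norm_self lam
    _ ≤ r := hr_max _ hlam_root
  exact le_antisymm hlam_le hr_le

/-- Perron–Frobenius, part 2. -/
theorem stmt_2 {n : ℕ} (A : Matrix (Fin n) (Fin n) ℝ)
    (hA : ∀ i j, 0 ≤ A i j)
    (lam r : ℝ) (u v : Fin n → ℝ) (hu : ∀ i, 0 < u i) (hv : ∀ i, 0 < v i)
    (hAv : A.mulVec v = lam • v) (huA : A.vecMul u = lam • u)
    (hr0 : 0 ≤ r)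
    (hr_eig : ((A.map (algebraMap ℝ ℂ)).charpoly).IsRoot (r : ℂ))
    (hr_max : ∀ μ : ℂ, ((A.map (algebraMap ℝ ℂ)).charpoly).IsRoot μ → ‖μ‖ ≤ r) :
    lam = r :=
  stmt_2_general A hA lam r u v hu hv hAv huA hr_eig hr_max
end

section
/- Let A be an irreducible nonnegative n×n matrix with largest eigenvalue 1 and a positive vector w that is both a left and right eigenvector for eigenvalue 1, normalized so ⟨w,w⟩ = 1. If for every vector x orthogonal to w we have ⟨x, Ax⟩ ≤ γ⟨x,x⟩ for some 0 ≤ γ ≤ 1, then φ(A) ≥ (1−γ)/2. -/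
/-!
Write `x = D_w 𝟙_S`, so `⟨x, w⟩ = ⟨x, x⟩ = μ := ∑_{i ∈ S} w_i²`. Since `w` is a left and right
eigenvector, the cut weight is `μ - ⟨x, A x⟩`, and splitting `x = μ w + v` with `v ⊥ w` kills the
cross terms, so `⟨x, A x⟩ = μ² + ⟨v, A v⟩ ≤ μ² + γ (μ - μ²)`. Hence the cut weight is at least
`(1 - γ) μ (1 - μ) ≥ (1 - γ) μ / 2` as `μ ≤ 1/2`.
-/

open Matrix Finset

section QuadraticForm

variable {ι R : Type*} [Fintype ι] [CommRing R]

theorem dotProduct_mulVec_eq_of_isEigenvector {A : Matrix ι ι R} {w : ι → R}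
    (hAw : A *ᵥ w = w) (hwA : w ᵥ* A = w) (hww : w ⬝ᵥ w = 1) (x : ι → R) :
    x ⬝ᵥ A *ᵥ x =
      (x ⬝ᵥ w) ^ 2 + (x - (x ⬝ᵥ w) • w) ⬝ᵥ A *ᵥ (x - (x ⬝ᵥ w) • w) := by
  have hwAx : w ⬝ᵥ A *ᵥ x = x ⬝ᵥ w := by rw [dotProduct_mulVec, hwA, dotProduct_comm]
  simp only [mulVec_sub, mulVec_smul, hAw, dotProduct_sub, sub_dotProduct, dotProduct_smul,
    smul_dotProduct, hwAx, hww, smul_eq_mul]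
  ring

theorem dotProduct_sub_smul_self {w : ι → R} (hww : w ⬝ᵥ w = 1) (x : ι → R) :
    (x - (x ⬝ᵥ w) • w) ⬝ᵥ (x - (x ⬝ᵥ w) • w) = x ⬝ᵥ x - (x ⬝ᵥ w) ^ 2 := by
  simp only [dotProduct_sub, sub_dotProduct, dotProduct_smul, smul_dotProduct, hww,
    dotProduct_comm w x, smul_eq_mul]
  ring

theorem sub_smul_dotProduct_eq_zero {w : ι → R} (hww : w ⬝ᵥ w = 1) (x : ι → R) :
    (x - (x ⬝ᵥ w) • w) ⬝ᵥ w = 0 := by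
  simp [sub_dotProduct, hww]

theorem dotProduct_mulVec_le_of_spectralGap {A : Matrix ι ι ℝ} {w : ι → ℝ} {γ : ℝ}
    (hAw : A *ᵥ w = w) (hwA : w ᵥ* A = w) (hww : w ⬝ᵥ w = 1)
    (hquad : ∀ v : ι → ℝ, v ⬝ᵥ w = 0 → v ⬝ᵥ A *ᵥ v ≤ γ * (v ⬝ᵥ v)) (x : ι → ℝ) :
    x ⬝ᵥ A *ᵥ x ≤ (x ⬝ᵥ w) ^ 2 + γ * (x ⬝ᵥ x - (x ⬝ᵥ w) ^ 2) := by
  rw [dotProduct_mulVec_eq_of_isEigenvector hAw hwA hww, ← dotProduct_sub_smul_self hww]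
  exact add_le_add_right (hquad _ (sub_smul_dotProduct_eq_zero hww x)) _

end QuadraticForm

section Cut

variable {ι R : Type*} [Fintype ι] [CommRing R]

theorem indicator_dotProduct (S : Finset ι) (u v : ι → R) :
    (S : Set ι).indicator u ⬝ᵥ v = ∑ i ∈ S, u i * v i := by
  classical
  simp only [dotProduct, Set.indicator_apply, Finset.mem_coe, ite_mul, zero_mul,
    Finset.sum_ite_mem, Finset.univ_inter]

theorem indicator_dotProduct_mulVec_indicator (A : Matrix ι ι R) (S : Finset ι) (w : ι → R) :
    (S : Set ι).indicator w ⬝ᵥ A *ᵥ (S : Set ι).indicator w =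
      ∑ i ∈ S, ∑ j ∈ S, w i * A i j * w j := by
  refine (indicator_dotProduct S w _).trans (Finset.sum_congr rfl fun i _ => ?_)
  change w i * (A i ⬝ᵥ _) = _
  rw [dotProduct_comm, indicator_dotProduct, Finset.mul_sum]
  exact Finset.sum_congr rfl fun j _ => by ring

theorem sum_sum_compl_eq_of_mulVec_eq [DecidableEq ι] {A : Matrix ι ι R} {w : ι → R}
    (hAw : A *ᵥ w = w) (S : Finset ι) :
    ∑ i ∈ S, ∑ j ∈ Sᶜ, w i * A i j * w j =
      ∑ i ∈ S, w i ^ 2 - (S : Set ι).indicator w ⬝ᵥ A *ᵥ (S : Set ι).indicator w := by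
  have hrow : ∀ i, ∑ j, w i * A i j * w j = w i ^ 2 := fun i => by
    simp only [mul_assoc, ← Finset.mul_sum, sq]
    exact congrArg (w i * ·) (congrFun hAw i)
  rw [indicator_dotProduct_mulVec_indicator, ← Finset.sum_congr rfl fun i _ => hrow i,
    ← Finset.sum_sub_distrib]
  refine Finset.sum_congr rfl fun i _ => ?_
  rw [← Finset.sum_add_sum_compl S, add_sub_cancel_left]

end Cut

theorem stmt_3_general {n : ℕ} (A : Matrix (Fin n) (Fin n) ℝ)
    (w : Fin n → ℝ) (hw : ∀ i, 0 < w i)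
    (hAw : A.mulVec w = w) (hwA : A.vecMul w = w)
    (hwnorm : ∑ i, w i ^ 2 = 1)
    (γ : ℝ) (hγ1 : γ ≤ 1)
    (hquad : ∀ x : Fin n → ℝ, x ⬝ᵥ w = 0 → x ⬝ᵥ A.mulVec x ≤ γ * (x ⬝ᵥ x)) :
    ∀ S : Finset (Fin n), S.Nonempty → (∑ i ∈ S, w i ^ 2) ≤ 1 / 2 →
      (1 - γ) / 2 ≤ (∑ i ∈ S, ∑ j ∈ Sᶜ, w i * A i j * w j) / (∑ i ∈ S, w i ^ 2) := by
  intro S hS hShalf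
  set μ := ∑ i ∈ S, w i ^ 2
  set x := (S : Set (Fin n)).indicator w
  have hμ : 0 < μ := Finset.sum_pos (fun i _ => pow_pos (hw i) 2) hS
  have hww : w ⬝ᵥ w = 1 := by simpa [dotProduct, sq] using hwnorm
  have hxw : x ⬝ᵥ w = μ := by simp only [x, μ, indicator_dotProduct, sq]
  have hxx : x ⬝ᵥ x = μ := by
    rw [← hxw, indicator_dotProduct, indicator_dotProduct]
    exact Finset.sum_congr rfl fun i hi => by
      rw [show x i = w i from Set.indicator_of_mem (mem_coe.2 hi) w]
  have hbound := dotProduct_mulVec_le_of_spectralGap hAw hwA hww hquad x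
  rw [hxw, hxx] at hbound
  rw [sum_sum_compl_eq_of_mulVec_eq hAw, le_div_iff₀ hμ]
  calc (1 - γ) / 2 * μ ≤ (1 - γ) * (μ * (1 - μ)) := by
        nlinarith [mul_nonneg (sub_nonneg.2 hγ1) hμ.le]
    _ ≤ μ - x ⬝ᵥ A *ᵥ x := by linarith

theorem stmt_3 {n : ℕ} (A : Matrix (Fin n) (Fin n) ℝ)
    (hA : ∀ i j, 0 ≤ A i j)
    (hirr : ∀ s t : Fin n, ∃ k : ℕ, 0 < k ∧ 0 < (A ^ k) s t)
    (w : Fin n → ℝ) (hw : ∀ i, 0 < w i)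
    (hAw : A.mulVec w = w) (hwA : A.vecMul w = w)
    (hwnorm : ∑ i, w i ^ 2 = 1)
    (γ : ℝ) (hγ0 : 0 ≤ γ) (hγ1 : γ ≤ 1)
    (hquad : ∀ x : Fin n → ℝ, x ⬝ᵥ w = 0 → x ⬝ᵥ A.mulVec x ≤ γ * (x ⬝ᵥ x)) :
    ∀ S : Finset (Fin n), S.Nonempty → (∑ i ∈ S, w i ^ 2) ≤ 1 / 2 →
      (1 - γ) / 2 ≤ (∑ i ∈ S, ∑ j ∈ Sᶜ, w i * A i j * w j) / (∑ i ∈ S, w i ^ 2) :=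
  stmt_3_general A w hw hAw hwA hwnorm γ hγ1 hquad
end

section
/- Let R and B be nonnegative n×n matrices having the same positive left eigenvector u and the same positive right eigenvector v for eigenvalue 1. Then for every cut S ⊆ [n], φ_S(RB) ≤ φ_S(R) + φ_S(B). -/
open Matrix Finset

/-!
Split the sum defining the cut weight of `R * B` according to whether the intermediate index `k`
lies in `S` or not. When `k ∈ S`, the path `i → k` stays inside `S`, and summing `u i R i k` over
`i ∈ S` gives at most `(uR) k = u k`; what is left is the cut weight of `B`. When `k ∉ S`, the
path `k → j` stays outside `S`, and summing `B k j v j` over `j ∉ S` gives at most `(Bv) k = v k`;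
what is left is the cut weight of `R`. Dividing by `∑ i ∈ S, u i v i` gives the statement.
-/

section CutWeight

variable {ι α : Type*} [Fintype ι] [CommSemiring α]

/-- The summand `⟨𝟙_S, D_u M D_v 𝟙_{S̄}⟩` of the paper's `γ_S(M)`. -/
def cutWeight [DecidableEq ι] (u : ι → α) (M : Matrix ι ι α) (v : ι → α) (S : Finset ι) : α :=
  ∑ i ∈ S, ∑ j ∈ Sᶜ, u i * M i j * v j

theorem cutWeight_mul_eq [DecidableEq ι] (u : ι → α) (R B : Matrix ι ι α) (v : ι → α)
    (S : Finset ι) :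
    cutWeight u (R * B) v S =
      ∑ k ∈ S, ∑ j ∈ Sᶜ, (∑ i ∈ S, u i * R i k) * B k j * v j +
      ∑ i ∈ S, ∑ k ∈ Sᶜ, u i * R i k * ∑ j ∈ Sᶜ, B k j * v j := by
  have split_middle : ∀ i j, u i * (R * B) i j * v j =
      ∑ k ∈ S, u i * R i k * B k j * v j + ∑ k ∈ Sᶜ, u i * R i k * B k j * v j := by
    intro i j
    rw [sum_add_sum_compl, mul_apply, mul_sum, sum_mul]
    exact sum_congr rfl fun k _ => by ring
  simp only [cutWeight, split_middle, sum_add_distrib, sum_mul, mul_sum]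
  congr 1
  · rw [sum_comm, sum_congr rfl fun j _ => sum_comm, sum_comm]
  · exact sum_congr rfl fun i _ => by rw [sum_comm]; simp only [mul_assoc]

variable [PartialOrder α] [IsOrderedRing α] {R B : Matrix ι ι α} {u v : ι → α}

theorem sum_mul_le_of_vecMul_eq (hR : ∀ i j, 0 ≤ R i j) (hu : ∀ i, 0 ≤ u i)
    (huR : R.vecMul u = u) (S : Finset ι) (k : ι) : ∑ i ∈ S, u i * R i k ≤ u k :=
  calc ∑ i ∈ S, u i * R i k ≤ ∑ i, u i * R i k :=
        sum_le_sum_of_subset_of_nonneg S.subset_univ fun i _ _ => mul_nonneg (hu i) (hR i k)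
    _ = u k := congrFun huR k

theorem sum_mul_le_of_mulVec_eq (hB : ∀ i j, 0 ≤ B i j) (hv : ∀ i, 0 ≤ v i)
    (hBv : B.mulVec v = v) (S : Finset ι) (k : ι) : ∑ j ∈ S, B k j * v j ≤ v k :=
  calc ∑ j ∈ S, B k j * v j ≤ ∑ j, B k j * v j :=
        sum_le_sum_of_subset_of_nonneg S.subset_univ fun j _ _ => mul_nonneg (hB k j) (hv j)
    _ = v k := congrFun hBv k

theorem cutWeight_mul_le [DecidableEq ι] (hR : ∀ i j, 0 ≤ R i j) (hB : ∀ i j, 0 ≤ B i j)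
    (hu : ∀ i, 0 ≤ u i) (hv : ∀ i, 0 ≤ v i) (huR : R.vecMul u = u) (hBv : B.mulVec v = v)
    (S : Finset ι) :
    cutWeight u (R * B) v S ≤ cutWeight u R v S + cutWeight u B v S := by
  rw [cutWeight_mul_eq, add_comm (cutWeight u R v S)]
  unfold cutWeight
  gcongr with k _ j _ i _ k _
  · exact hv j
  · exact hB k j
  · exact sum_mul_le_of_vecMul_eq hR hu huR S k
  · exact mul_nonneg (hu i) (hR i k)
  · exact sum_mul_le_of_mulVec_eq hB hv hBv Sᶜ k

end CutWeight

theorem stmt_5_general {n : ℕ} (R B : Matrix (Fin n) (Fin n) ℝ)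
    (hR : ∀ i j, 0 ≤ R i j) (hB : ∀ i j, 0 ≤ B i j)
    (u v : Fin n → ℝ) (hu : ∀ i, 0 < u i) (hv : ∀ i, 0 < v i)
    (huR : R.vecMul u = u)
    (hBv : B.mulVec v = v)
    (S : Finset (Fin n)) :
    (∑ i ∈ S, ∑ j ∈ Sᶜ, u i * (R * B) i j * v j) / (∑ i ∈ S, u i * v i) ≤
      (∑ i ∈ S, ∑ j ∈ Sᶜ, u i * R i j * v j) / (∑ i ∈ S, u i * v i) +
      (∑ i ∈ S, ∑ j ∈ Sᶜ, u i * B i j * v j) / (∑ i ∈ S, u i * v i) := by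
  rw [← add_div]
  exact div_le_div_of_nonneg_right
    (cutWeight_mul_le hR hB (fun i => (hu i).le) (fun i => (hv i).le) huR hBv S)
    (sum_nonneg fun i _ => (mul_pos (hu i) (hv i)).le)

/-- submultiplicativity of the edge expansion of a cut. -/
theorem stmt_5 {n : ℕ} (R B : Matrix (Fin n) (Fin n) ℝ)
    (hR : ∀ i j, 0 ≤ R i j) (hB : ∀ i j, 0 ≤ B i j)
    (u v : Fin n → ℝ) (hu : ∀ i, 0 < u i) (hv : ∀ i, 0 < v i)
    (hRv : R.mulVec v = v) (huR : R.vecMul u = u)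
    (hBv : B.mulVec v = v) (huB : B.vecMul u = u)
    (S : Finset (Fin n)) :
    (∑ i ∈ S, ∑ j ∈ Sᶜ, u i * (R * B) i j * v j) / (∑ i ∈ S, u i * v i) ≤
      (∑ i ∈ S, ∑ j ∈ Sᶜ, u i * R i j * v j) / (∑ i ∈ S, u i * v i) +
      (∑ i ∈ S, ∑ j ∈ Sᶜ, u i * B i j * v j) / (∑ i ∈ S, u i * v i) :=
  stmt_5_general R B hR hB u v hu hv huR hBv S
end

section
/- Let R be an irreducible nonnegative n×n matrix with positive left and right eigenvectors u and v for the Perron eigenvalue 1. Then for every positive integer k, φ(R^k) ≤ k · φ(R). -/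
open Matrix Finset

/-- The edge expansion `φ(M)` of a nonnegative matrix with positive left and right
eigenvectors `u`, `v` for the Perron eigenvalue 1. -/
noncomputable def ePhi {n : ℕ} (u v : Fin n → ℝ) (M : Matrix (Fin n) (Fin n) ℝ) : ℝ :=
  sInf {x : ℝ | ∃ S : Finset (Fin n), S.Nonempty ∧
    (∑ i ∈ S, u i * v i) ≤ (1 / 2) * ∑ i, u i * v i ∧
    x = (∑ i ∈ S, ∑ j ∈ Sᶜ, u i * M i j * v j) / (∑ i ∈ S, u i * v i)}

/-!
Write `f_S(M) = ∑_{i ∈ S, j ∉ S} u_i M_ij v_j` (`cutFlow u v M S`) for the weighted flow of `M`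
across the cut `S`, so that `φ_S(M) = f_S(M) / ∑_{i ∈ S} u_i v_i`. Expanding
`(AB)_ij = ∑_m A_im B_mj` and splitting on whether the middle index `m` lies in `S`, the part
with `m ∈ S` is bounded by `f_S(B)` (using `u A ≤ u`) and the part with `m ∉ S` by `f_S(A)`
(using `B v ≤ v`). Hence `f_S` is subadditive along products, `f_S(R^k) ≤ k f_S(R)`, and the
bound passes to the minimum over cuts.
-/

section CutFlow

variable {ι : Type*} [Fintype ι] {u v : ι → ℝ} {A B : Matrix ι ι ℝ}

theorem sum_mul_apply_le_of_vecMul_le (hu : ∀ i, 0 ≤ u i) (hA : ∀ i j, 0 ≤ A i j)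
    (huA : u ᵥ* A ≤ u) (S : Finset ι) (m : ι) : ∑ i ∈ S, u i * A i m ≤ u m :=
  calc ∑ i ∈ S, u i * A i m
      ≤ ∑ i, u i * A i m :=
        Finset.sum_le_sum_of_subset_of_nonneg (Finset.subset_univ _)
          fun i _ _ => mul_nonneg (hu i) (hA i m)
    _ = (u ᵥ* A) m := rfl
    _ ≤ u m := huA m

theorem sum_apply_mul_le_of_mulVec_le (hv : ∀ j, 0 ≤ v j) (hB : ∀ i j, 0 ≤ B i j)
    (hBv : B *ᵥ v ≤ v) (S : Finset ι) (m : ι) : ∑ j ∈ S, B m j * v j ≤ v m :=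
  calc ∑ j ∈ S, B m j * v j
      ≤ ∑ j, B m j * v j :=
        Finset.sum_le_sum_of_subset_of_nonneg (Finset.subset_univ _)
          fun j _ _ => mul_nonneg (hB m j) (hv j)
    _ = (B *ᵥ v) m := rfl
    _ ≤ v m := hBv m

variable [DecidableEq ι]

def cutFlow (u v : ι → ℝ) (M : Matrix ι ι ℝ) (S : Finset ι) : ℝ :=
  ∑ i ∈ S, ∑ j ∈ Sᶜ, u i * M i j * v j

theorem cutFlow_one (u v : ι → ℝ) (S : Finset ι) : cutFlow u v 1 S = 0 := by
  refine Finset.sum_eq_zero fun i hi => Finset.sum_eq_zero fun j hj => ?_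
  have hij : i ≠ j := by rintro rfl; exact (Finset.mem_compl.1 hj) hi
  simp [Matrix.one_apply_ne hij]

theorem cutFlow_mul_le (hu : ∀ i, 0 ≤ u i) (hv : ∀ j, 0 ≤ v j)
    (hA : ∀ i j, 0 ≤ A i j) (hB : ∀ i j, 0 ≤ B i j) (huA : u ᵥ* A ≤ u) (hBv : B *ᵥ v ≤ v)
    (S : Finset ι) : cutFlow u v (A * B) S ≤ cutFlow u v A S + cutFlow u v B S := by
  set t : ι → ι → ι → ℝ := fun i m j => u i * A i m * (B m j * v j)
  have h_split : cutFlow u v (A * B) S =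
      (∑ i ∈ S, ∑ j ∈ Sᶜ, ∑ m ∈ S, t i m j) + ∑ i ∈ S, ∑ j ∈ Sᶜ, ∑ m ∈ Sᶜ, t i m j := by
    simp only [cutFlow, ← Finset.sum_add_distrib, Finset.sum_add_sum_compl, Matrix.mul_apply,
      Finset.mul_sum, Finset.sum_mul, t, mul_assoc]
  have h_inside : ∑ i ∈ S, ∑ j ∈ Sᶜ, ∑ m ∈ S, t i m j ≤ cutFlow u v B S :=
    calc ∑ i ∈ S, ∑ j ∈ Sᶜ, ∑ m ∈ S, t i m j
        = ∑ m ∈ S, ∑ j ∈ Sᶜ, (∑ i ∈ S, u i * A i m) * (B m j * v j) := by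
          rw [Finset.sum_comm_cycle]
          simp only [Finset.sum_mul, t]
          exact Finset.sum_congr rfl fun _ _ => Finset.sum_comm
      _ ≤ ∑ m ∈ S, ∑ j ∈ Sᶜ, u m * (B m j * v j) := by
          gcongr with m _ j _
          · exact mul_nonneg (hB m j) (hv j)
          · exact sum_mul_apply_le_of_vecMul_le hu hA huA S m
      _ = cutFlow u v B S := by simp only [cutFlow, mul_assoc]
  have h_outside : ∑ i ∈ S, ∑ j ∈ Sᶜ, ∑ m ∈ Sᶜ, t i m j ≤ cutFlow u v A S :=
    calc ∑ i ∈ S, ∑ j ∈ Sᶜ, ∑ m ∈ Sᶜ, t i m j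
        = ∑ i ∈ S, ∑ m ∈ Sᶜ, u i * A i m * ∑ j ∈ Sᶜ, B m j * v j := by
          simp only [Finset.mul_sum, t]
          exact Finset.sum_congr rfl fun _ _ => Finset.sum_comm
      _ ≤ ∑ i ∈ S, ∑ m ∈ Sᶜ, u i * A i m * v m := by
          gcongr with i _ m _
          · exact mul_nonneg (hu i) (hA i m)
          · exact sum_apply_mul_le_of_mulVec_le hv hB hBv Sᶜ m
      _ = cutFlow u v A S := rfl
  linarith

theorem vecMul_pow_eq_self {R : Matrix ι ι ℝ} (huR : u ᵥ* R = u) (k : ℕ) : u ᵥ* (R ^ k) = u := by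
  induction k with
  | zero => simp
  | succ k ih => rw [pow_succ, ← Matrix.vecMul_vecMul, ih, huR]

theorem cutFlow_pow_le {R : Matrix ι ι ℝ} (hu : ∀ i, 0 ≤ u i) (hv : ∀ j, 0 ≤ v j)
    (hR : ∀ i j, 0 ≤ R i j) (huR : u ᵥ* R = u) (hRv : R *ᵥ v = v) (S : Finset ι) (k : ℕ) :
    cutFlow u v (R ^ k) S ≤ k * cutFlow u v R S := by
  induction k with
  | zero => simp [cutFlow_one]
  | succ k ih =>
    calc cutFlow u v (R ^ (k + 1)) S
        ≤ cutFlow u v (R ^ k) S + cutFlow u v R S := by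
          rw [pow_succ]
          exact cutFlow_mul_le hu hv (Matrix.pow_apply_nonneg hR k) hR
            (vecMul_pow_eq_self huR k).le hRv.le S
      _ ≤ (k + 1 : ℕ) * cutFlow u v R S := by push_cast; linarith

end CutFlow

theorem sInf_image_le_mul_sInf_image {α : Type*} {s : Set α} (hs : s.Finite) {f g : α → ℝ}
    {c : ℝ} (hfg : ∀ a ∈ s, f a ≤ c * g a) : sInf (f '' s) ≤ c * sInf (g '' s) := by
  rcases s.eq_empty_or_nonempty with rfl | hne
  · simp
  obtain ⟨a, ha, ha_min⟩ := Set.exists_min_image s g hs hne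
  have hg_min : sInf (g '' s) = g a :=
    IsLeast.csInf_eq ⟨Set.mem_image_of_mem g ha, Set.forall_mem_image.2 ha_min⟩
  calc sInf (f '' s) ≤ f a := csInf_le (hs.image f).bddBelow (Set.mem_image_of_mem f ha)
    _ ≤ c * sInf (g '' s) := hg_min ▸ hfg a ha

theorem ePhi_eq_sInf_image {n : ℕ} (u v : Fin n → ℝ) (M : Matrix (Fin n) (Fin n) ℝ) :
    ePhi u v M = sInf ((fun S => cutFlow u v M S / ∑ i ∈ S, u i * v i) ''
      {S | S.Nonempty ∧ ∑ i ∈ S, u i * v i ≤ 1 / 2 * ∑ i, u i * v i}) := by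
  simp only [ePhi, cutFlow, Set.image, Set.mem_ofPred_eq, and_assoc, eq_comm]

theorem stmt_6_general {n : ℕ} (R : Matrix (Fin n) (Fin n) ℝ)
    (hR : ∀ i j, 0 ≤ R i j)
    (u v : Fin n → ℝ) (hu : ∀ i, 0 < u i) (hv : ∀ i, 0 < v i)
    (huR : R.vecMul u = u) (hRv : R.mulVec v = v)
    (k : ℕ) :
    ePhi u v (R ^ k) ≤ (k : ℝ) * ePhi u v R := by
  rw [ePhi_eq_sInf_image, ePhi_eq_sInf_image]
  refine sInf_image_le_mul_sInf_image (Set.toFinite _) fun S _ => ?_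
  rw [mul_div_assoc']
  exact div_le_div_of_nonneg_right
    (cutFlow_pow_le (fun i => (hu i).le) (fun j => (hv j).le) hR huR hRv S k)
    (Finset.sum_nonneg fun i _ => mul_nonneg (hu i).le (hv i).le)

/-- φ(R^k) ≤ k·φ(R). -/
theorem stmt_6 {n : ℕ} (R : Matrix (Fin n) (Fin n) ℝ)
    (hR : ∀ i j, 0 ≤ R i j)
    (hirr : ∀ s t : Fin n, ∃ k : ℕ, 0 < k ∧ 0 < (R ^ k) s t)
    (u v : Fin n → ℝ) (hu : ∀ i, 0 < u i) (hv : ∀ i, 0 < v i)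
    (huR : R.vecMul u = u) (hRv : R.mulVec v = v)
    (k : ℕ) (hk : 0 < k) :
    ePhi u v (R ^ k) ≤ (k : ℝ) * ePhi u v R :=
  stmt_6_general R hR u v hu hv huR hRv k
end

section
/- Let T be an n×n upper triangular complex matrix with operator norm ‖T‖₂ = σ ≥ 1 and every diagonal entry satisfying |T_{ii}| ≤ α < 1. Then for every positive integer k, ‖T^k‖₂ ≤ n · σⁿ · C(k+n, n) · α^{k−n}. -/
/-!
Write `r = j - i`. Expanding `(T ^ (k + 1)) i j = ∑ l, (T ^ k) i l * T l j` over `i ≤ l ≤ j`, the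
diagonal factor `T j j` costs `α` and an off-diagonal one costs `σ`, which gives
`‖(T ^ k) i j‖ ≤ C(r + k, k) σ ^ r α ^ (k - r)` by induction on `k`, the binomial coefficients
adding up by the hockey-stick identity. As `r < n`, `σ ≥ 1` and `α ≤ 1`, every entry of `T ^ k` is
at most `C(n + k, k) σ ^ n α ^ (k - n)`, and the operator norm is at most the Frobenius norm, hence
at most `n` times the largest entry.
-/

open Matrix Finset

/-- The ℓ²→ℓ² operator norm of a complex matrix. -/
noncomputable def euclidOpNormC {n : ℕ} (M : Matrix (Fin n) (Fin n) ℂ) : ℝ :=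
  ‖LinearMap.toContinuousLinearMap (Matrix.toEuclideanLin M)‖

open scoped Matrix.Norms.Frobenius in
lemma Matrix.frobenius_norm_le_card_mul {ι 𝕜 : Type*} [Fintype ι] [RCLike 𝕜]
    (M : Matrix ι ι 𝕜) {B : ℝ} (hB : 0 ≤ B) (h : ∀ i j, ‖M i j‖ ≤ B) :
    ‖M‖ ≤ Fintype.card ι * B := by
  have hsum : ∑ i, ∑ j, ‖M i j‖ ^ 2 ≤ (Fintype.card ι * B) ^ 2 := by
    calc ∑ i, ∑ j, ‖M i j‖ ^ 2 ≤ ∑ _i : ι, ∑ _j : ι, B ^ 2 := by gcongr with i _ j _; exact h i j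
      _ = (Fintype.card ι * B) ^ 2 := by simp only [sum_const, card_univ, nsmul_eq_mul]; ring
  rw [frobenius_norm_def, ← Real.sqrt_eq_rpow]
  simp only [Real.rpow_two]
  exact Real.sqrt_le_iff.mpr ⟨by positivity, hsum⟩

open scoped Matrix.Norms.Frobenius in
lemma euclidOpNormC_le_frobenius_norm {n : ℕ} (M : Matrix (Fin n) (Fin n) ℂ) :
    euclidOpNormC M ≤ ‖M‖ := by
  refine ContinuousLinearMap.opNorm_le_bound _ (norm_nonneg _) fun x => ?_
  have h := frobenius_norm_mul M (replicateCol Unit x.ofLp)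
  rwa [← replicateCol_mulVec, frobenius_norm_replicateCol, frobenius_norm_replicateCol] at h

lemma euclidOpNormC_le_card_mul {n : ℕ} (M : Matrix (Fin n) (Fin n) ℂ) {B : ℝ} (hB : 0 ≤ B)
    (h : ∀ i j, ‖M i j‖ ≤ B) : euclidOpNormC M ≤ n * B := by
  simpa using (euclidOpNormC_le_frobenius_norm M).trans (frobenius_norm_le_card_mul M hB h)

lemma norm_apply_le_euclidOpNormC {n : ℕ} (M : Matrix (Fin n) (Fin n) ℂ) (i j : Fin n) :
    ‖M i j‖ ≤ euclidOpNormC M := by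
  let L := LinearMap.toContinuousLinearMap (Matrix.toEuclideanLin M)
  have hcol : L (EuclideanSpace.single j 1) i = M i j := by
    simp [L, Matrix.toEuclideanLin, Matrix.mulVec_single]
  calc ‖M i j‖ = ‖L (EuclideanSpace.single j 1) i‖ := by rw [hcol]
    _ ≤ ‖L (EuclideanSpace.single j 1)‖ := PiLp.norm_apply_le _ i
    _ ≤ ‖L‖ * ‖(EuclideanSpace.single j 1 : EuclideanSpace ℂ (Fin n))‖ := L.le_opNorm _
    _ = euclidOpNormC M := by simp [L, euclidOpNormC]

lemma sum_fin_ite_Icc_eq_sum_range {M : Type*} [AddCommMonoid M] {n : ℕ} (f : ℕ → M)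
    {i j : Fin n} (hij : i ≤ j) :
    ∑ l : Fin n, (if (i : ℕ) ≤ l ∧ (l : ℕ) ≤ j then f (l - i : ℕ) else 0) =
      ∑ s ∈ range ((j - i : ℕ) + 1), f s := by
  rw [Fin.sum_univ_eq_sum_range (fun l => if i ≤ l ∧ l ≤ j then f (l - i) else 0), ← sum_filter]
  have hfilter : {l ∈ range n | (i : ℕ) ≤ l ∧ l ≤ j} = Ico (i : ℕ) (j + 1) := by
    ext l; simp only [mem_filter, mem_range, mem_Ico]; omega
  rw [hfilter, sum_Ico_eq_sum_range]
  simp only [Nat.add_sub_cancel_left]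
  congr 2; omega

section
variable {R : Type*} [NormedRing R] [NormOneClass R] {n : ℕ} {T : Matrix (Fin n) (Fin n) R}
  {σ α : ℝ}

lemma Matrix.BlockTriangular.norm_pow_apply_le (hT : T.BlockTriangular id) (hσ1 : 1 ≤ σ)
    (hα0 : 0 < α) (hα1 : α ≤ 1) (hdiag : ∀ i, ‖T i i‖ ≤ α)
    (hoff : ∀ i j, i < j → ‖T i j‖ ≤ σ) (k : ℕ) {i j : Fin n} (hij : i ≤ j) :
    ‖(T ^ k) i j‖ ≤
      ((j - i : ℕ) + k).choose k * σ ^ (j - i : ℕ) * α ^ ((k : ℤ) - (j - i : ℕ)) := by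
  induction k generalizing j with
  | zero =>
    rcases hij.eq_or_lt with rfl | hlt
    · simp
    · rw [pow_zero, one_apply_ne hlt.ne, norm_zero]; positivity
  | succ k ih =>
    set r := (j : ℕ) - i with hr
    set Q := σ ^ r * α ^ (((k + 1 : ℕ) : ℤ) - r) with hQ
    have hterm : ∀ l, ‖(T ^ k) i l‖ * ‖T l j‖ ≤
        if (i : ℕ) ≤ l ∧ (l : ℕ) ≤ j then (((l - i : ℕ) + k).choose k : ℝ) * Q else 0 := by
      intro l
      by_cases hil : i ≤ l
      swap
      · rw [(hT.pow k) (lt_of_not_ge hil), norm_zero, zero_mul, if_neg (by omega)]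
      by_cases hlj : l ≤ j
      swap
      · rw [hT (lt_of_not_ge hlj), norm_zero, mul_zero, if_neg (by omega)]
      rw [if_pos ⟨hil, hlj⟩]
      rcases hlj.eq_or_lt with rfl | hlt
      · calc ‖(T ^ k) i l‖ * ‖T l l‖
            ≤ ((r + k).choose k * σ ^ r * α ^ ((k : ℤ) - r)) * α :=
              mul_le_mul (ih hil) (hdiag l) (norm_nonneg _) (by positivity)
          _ = ((r + k).choose k : ℝ) * Q := by
              rw [hQ, mul_assoc, mul_assoc, ← zpow_add_one₀ hα0.ne']; push_cast; ring_nf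
      · calc ‖(T ^ k) i l‖ * ‖T l j‖
            ≤ (((l - i : ℕ) + k).choose k * σ ^ (l - i : ℕ) * α ^ ((k : ℤ) - (l - i : ℕ))) * σ :=
              mul_le_mul (ih hil) (hoff l j hlt) (norm_nonneg _) (by positivity)
          _ = (((l - i : ℕ) + k).choose k : ℝ) *
                (σ ^ ((l - i : ℕ) + 1) * α ^ ((k : ℤ) - (l - i : ℕ))) := by ring
          _ ≤ (((l - i : ℕ) + k).choose k : ℝ) * Q := by
              have hσ_le : σ ^ ((l - i : ℕ) + 1) ≤ σ ^ r := pow_le_pow_right₀ hσ1 (by omega)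
              have hα_le : α ^ ((k : ℤ) - (l - i : ℕ)) ≤ α ^ (((k + 1 : ℕ) : ℤ) - r) :=
                zpow_le_zpow_right_of_le_one₀ hα0 hα1 (by omega)
              rw [hQ]
              gcongr
    calc ‖(T ^ (k + 1)) i j‖ = ‖∑ l, (T ^ k) i l * T l j‖ := by rw [pow_succ, mul_apply]
      _ ≤ ∑ l, ‖(T ^ k) i l‖ * ‖T l j‖ := norm_sum_le_of_le _ fun l _ => norm_mul_le _ _
      _ ≤ ∑ l : Fin n, if (i : ℕ) ≤ l ∧ (l : ℕ) ≤ j then (((l - i : ℕ) + k).choose k : ℝ) * Q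
            else 0 := sum_le_sum fun l _ => hterm l
      _ = (∑ s ∈ range (r + 1), ((s + k).choose k : ℝ)) * Q := by
            rw [sum_mul]
            exact sum_fin_ite_Icc_eq_sum_range (fun s => ((s + k).choose k : ℝ) * Q) hij
      _ = ((r + (k + 1)).choose (k + 1) : ℝ) * σ ^ r * α ^ (((k + 1 : ℕ) : ℤ) - r) := by
            rw [← Nat.cast_sum, Nat.sum_range_add_choose, add_assoc, mul_assoc]

lemma Matrix.BlockTriangular.norm_pow_apply_le_uniform (hT : T.BlockTriangular id)
    (hσ1 : 1 ≤ σ) (hα0 : 0 < α) (hα1 : α ≤ 1) (hdiag : ∀ i, ‖T i i‖ ≤ α)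
    (hoff : ∀ i j, i < j → ‖T i j‖ ≤ σ) (k : ℕ) (i j : Fin n) :
    ‖(T ^ k) i j‖ ≤ (n + k).choose k * σ ^ n * α ^ ((k : ℤ) - n) := by
  by_cases hij : i ≤ j
  · have hr : (j - i : ℕ) ≤ n := by omega
    refine (hT.norm_pow_apply_le hσ1 hα0 hα1 hdiag hoff k hij).trans ?_
    have hchoose : (((j - i : ℕ) + k).choose k : ℝ) ≤ (n + k).choose k := by
      exact_mod_cast Nat.choose_le_choose k (by omega)
    have hσ_le : σ ^ (j - i : ℕ) ≤ σ ^ n := pow_le_pow_right₀ hσ1 hr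
    have hα_le : α ^ ((k : ℤ) - (j - i : ℕ)) ≤ α ^ ((k : ℤ) - n) :=
      zpow_le_zpow_right_of_le_one₀ hα0 hα1 (by omega)
    gcongr
  · rw [(hT.pow k) (lt_of_not_ge hij), norm_zero]
    positivity
end

theorem stmt_7_general {n : ℕ} (T : Matrix (Fin n) (Fin n) ℂ)
    (hT : T.BlockTriangular id)
    (σ : ℝ) (hσ : euclidOpNormC T = σ) (hσ1 : 1 ≤ σ)
    (α : ℝ) (hα0 : 0 < α) (hα1 : α < 1)
    (hdiag : ∀ i, ‖T i i‖ ≤ α)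
    (k : ℕ) :
    euclidOpNormC (T ^ k) ≤
      (n : ℝ) * σ ^ n * ((k + n).choose n : ℝ) * α ^ ((k : ℤ) - (n : ℤ)) := by
  have hoff : ∀ i j, i < j → ‖T i j‖ ≤ σ := fun i j _ => hσ ▸ norm_apply_le_euclidOpNormC T i j
  have hentries := hT.norm_pow_apply_le_uniform hσ1 hα0 hα1.le hdiag hoff k
  calc euclidOpNormC (T ^ k)
      ≤ n * ((n + k).choose k * σ ^ n * α ^ ((k : ℤ) - n)) :=
        euclidOpNormC_le_card_mul _ (by positivity) hentries
    _ = n * σ ^ n * ((k + n).choose n : ℝ) * α ^ ((k : ℤ) - (n : ℤ)) := by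
        rw [add_comm k n, ← Nat.choose_symm_add]; ring

/-- bounded norm of powers of an upper triangular matrix. -/
theorem stmt_7 {n : ℕ} (T : Matrix (Fin n) (Fin n) ℂ)
    (hT : T.BlockTriangular id)
    (σ : ℝ) (hσ : euclidOpNormC T = σ) (hσ1 : 1 ≤ σ)
    (α : ℝ) (hα0 : 0 < α) (hα1 : α < 1)
    (hdiag : ∀ i, ‖T i i‖ ≤ α)
    (k : ℕ) (hk : 0 < k) :
    euclidOpNormC (T ^ k) ≤
      (n : ℝ) * σ ^ n * ((k + n).choose n : ℝ) * α ^ ((k : ℤ) - (n : ℤ)) :=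
  stmt_7_general T hT σ hσ hσ1 α hα0 hα1 hdiag k
end

section
/- Let A be the de Bruijn matrix on n = 2^k vertices. Then 1/(2 log₂ n) ≤ φ(A) ≤ 8/log₂ n. -/
open Matrix Finset

/-- The edge expansion of a doubly stochastic matrix over an arbitrary finite vertex set. -/
noncomputable def phiDS {V : Type*} [Fintype V] [DecidableEq V]
    (A : Matrix V V ℝ) : ℝ :=
  sInf {x : ℝ | ∃ S : Finset V, S.Nonempty ∧ 2 * S.card ≤ Fintype.card V ∧
    x = (∑ i ∈ S, ∑ j ∈ Sᶜ, A i j) / (S.card : ℝ)}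

/-!
Lower bound: for doubly stochastic matrices the cut `∑_{i ∈ S, j ∉ S} M i j` is subadditive
under products, so `cut (A ^ k) S ≤ k * cut A S`. After `k` steps the de Bruijn walk has forgotten
its start: every entry of `A ^ k` is at least `2⁻ᵏ = 1 / n`, hence
`cut (A ^ k) S ≥ |S| |Sᶜ| / n ≥ |S| / 2` when `|S| ≤ n / 2`.

Upper bound: let `S` be the strings containing a run of `m = ⌈k/2⌉` ones and `a = ⌊k/2⌋`.
A step shifts the string by one place, so the walk can leave `S` only from a string whose run
occupies the last `m` positions and is preceded by a zero; there are `2 ^ (a - 1)` such strings.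
On the other hand `S` contains, for each `1 ≤ p ≤ a`, the `2 ^ (a - 1)` strings with a zero at
`p - 1` followed by the run, and these families are disjoint. Hence `φ ≤ 1 / a ≤ 8 / k`; for
small `k` the trivial bound `φ ≤ 1` suffices.
-/

lemma card_filter_forall_mem_eq {ι α : Type*} [Fintype ι] [DecidableEq ι] [Fintype α]
    (T : Finset ι) (g : ι → α) [DecidablePred fun x : ι → α => ∀ i ∈ T, x i = g i] :
    #{x : ι → α | ∀ i ∈ T, x i = g i} = Fintype.card α ^ (Fintype.card ι - #T) := by
  have : ({x : ι → α | ∀ i ∈ T, x i = g i} : Finset _) =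
      Fintype.piFinset fun i => if i ∈ T then {g i} else univ := by
    ext x
    simp only [mem_filter, mem_univ, true_and, Fintype.mem_piFinset]
    refine ⟨fun h i => ?_, fun h i hi => by simpa [hi] using h i⟩
    split_ifs with hi <;> simp [h i, hi]
  rw [this, Fintype.card_piFinset]
  simp only [apply_ite card, card_singleton, card_univ]
  rw [prod_ite, prod_const_one, one_mul, prod_const, ← card_compl]
  congr 2
  ext i
  simp

section Cut

variable {V : Type*} [Fintype V] [DecidableEq V]

def cut (A : Matrix V V ℝ) (S : Finset V) : ℝ := ∑ i ∈ S, ∑ j ∈ Sᶜ, A i j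

lemma cut_nonneg {A : Matrix V V ℝ} (hA : ∀ i j, 0 ≤ A i j) (S : Finset V) : 0 ≤ cut A S :=
  sum_nonneg fun i _ => sum_nonneg fun j _ => hA i j

lemma sum_le_one_of_mem_doublyStochastic {A : Matrix V V ℝ} (hA : A ∈ doublyStochastic ℝ V)
    (i : V) (T : Finset V) : ∑ j ∈ T, A i j ≤ 1 :=
  (sum_le_univ_sum_of_nonneg fun _ => nonneg_of_mem_doublyStochastic hA).trans
    (sum_row_of_mem_doublyStochastic hA i).le

lemma cut_le_card_inter {A : Matrix V V ℝ} (hA : A ∈ doublyStochastic ℝ V) {S X : Finset V}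
    (hX : ∀ i ∈ S, i ∉ X → ∀ j ∉ S, A i j = 0) : cut A S ≤ #(S ∩ X) := by
  have hzero : ∀ i ∈ S, i ∉ S ∩ X → ∑ j ∈ Sᶜ, A i j = 0 := fun i hi hiX =>
    sum_eq_zero fun j hj => hX i hi (fun h => hiX (mem_inter.2 ⟨hi, h⟩)) j (mem_compl.1 hj)
  calc cut A S = ∑ i ∈ S ∩ X, ∑ j ∈ Sᶜ, A i j := (sum_subset inter_subset_left hzero).symm
    _ ≤ ∑ i ∈ S ∩ X, 1 := sum_le_sum fun i _ => sum_le_one_of_mem_doublyStochastic hA i _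
    _ = #(S ∩ X) := by simp

lemma cut_mul_le {M N : Matrix V V ℝ} (hM : M ∈ doublyStochastic ℝ V)
    (hN : N ∈ doublyStochastic ℝ V) (S : Finset V) :
    cut (M * N) S ≤ cut M S + cut N S := by
  set c : V → ℝ := fun l => ∑ j ∈ Sᶜ, N l j
  have hc0 : ∀ l, 0 ≤ c l := fun l => sum_nonneg fun j _ => nonneg_of_mem_doublyStochastic hN
  have hrow : ∀ i, ∑ j ∈ Sᶜ, (M * N) i j = ∑ l, M i l * c l := fun i => by
    simp only [mul_apply, c, mul_sum]
    exact sum_comm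
  calc cut (M * N) S = ∑ i ∈ S, ∑ l ∈ Sᶜ, M i l * c l + ∑ l ∈ S, (∑ i ∈ S, M i l) * c l := by
        simp only [cut, hrow, ← sum_add_sum_compl S, sum_add_distrib, sum_mul]
        rw [add_comm, sum_comm (s := S) (t := S)]
    _ ≤ ∑ i ∈ S, ∑ l ∈ Sᶜ, M i l * 1 + ∑ l ∈ S, 1 * c l := by
        gcongr with i _ l _ l
        · exact nonneg_of_mem_doublyStochastic hM
        · exact sum_le_one_of_mem_doublyStochastic hN l _
        · exact hc0 l
        · simpa using sum_le_one_of_mem_doublyStochastic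
            (transpose_mem_doublyStochastic_iff.2 hM) l S
    _ = cut M S + cut N S := by simp [cut, c]

lemma cut_pow_le {A : Matrix V V ℝ} (hA : A ∈ doublyStochastic ℝ V) (S : Finset V) (n : ℕ) :
    cut (A ^ n) S ≤ n * cut A S := by
  induction n with
  | zero =>
    simp only [pow_zero, Nat.cast_zero, zero_mul, cut]
    exact (sum_eq_zero fun i hi => sum_eq_zero fun j hj =>
      one_apply_ne fun h => mem_compl.1 hj (h ▸ hi)).le
  | succ n ih =>
    calc cut (A ^ (n + 1)) S ≤ cut (A ^ n) S + cut A S :=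
          pow_succ A n ▸ cut_mul_le (pow_mem hA n) hA S
      _ ≤ (n + 1 : ℕ) * cut A S := by push_cast; linarith

lemma mul_card_mul_card_le_cut {A : Matrix V V ℝ} {c : ℝ} (h : ∀ i j, c ≤ A i j)
    (S : Finset V) : c * #S * #Sᶜ ≤ cut A S := by
  calc c * #S * #Sᶜ = ∑ i ∈ S, ∑ j ∈ Sᶜ, c := by simp; ring
    _ ≤ cut A S := sum_le_sum fun i _ => sum_le_sum fun j _ => h i j

lemma cut_le_card {A : Matrix V V ℝ} (hA : A ∈ doublyStochastic ℝ V) (S : Finset V) :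
    cut A S ≤ #S :=
  (cut_le_card_inter hA (X := S) fun _ hi hiS => absurd hi hiS).trans (by simp)

lemma phiDS_le {A : Matrix V V ℝ} (hA : ∀ i j, 0 ≤ A i j) {S : Finset V} (hS : S.Nonempty)
    (h2S : 2 * #S ≤ Fintype.card V) : phiDS A ≤ cut A S / #S :=
  csInf_le ⟨0, by rintro _ ⟨T, -, -, rfl⟩; exact div_nonneg (cut_nonneg hA T) (Nat.cast_nonneg _)⟩
    ⟨S, hS, h2S, rfl⟩

lemma le_phiDS {A : Matrix V V ℝ} {c : ℝ} (hV : 2 ≤ Fintype.card V)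
    (h : ∀ S : Finset V, S.Nonempty → 2 * #S ≤ Fintype.card V → c ≤ cut A S / #S) :
    c ≤ phiDS A := by
  obtain ⟨v⟩ : Nonempty V := Fintype.card_pos_iff.1 (by omega)
  exact le_csInf ⟨_, {v}, singleton_nonempty v, by simpa using hV, rfl⟩
    (by rintro _ ⟨S, hS, h2S, rfl⟩; exact h S hS h2S)

lemma phiDS_le_one {A : Matrix V V ℝ} (hA : A ∈ doublyStochastic ℝ V)
    (hV : 2 ≤ Fintype.card V) : phiDS A ≤ 1 := by
  obtain ⟨v⟩ : Nonempty V := Fintype.card_pos_iff.1 (by omega)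
  refine (phiDS_le (mem_doublyStochastic.1 hA).1 (singleton_nonempty v)
    (by simpa using hV)).trans ?_
  simpa using cut_le_card hA {v}

lemma one_div_two_mul_le_phiDS_of_pow {A : Matrix V V ℝ} (hA : A ∈ doublyStochastic ℝ V)
    (hV : 2 ≤ Fintype.card V) {m : ℕ} (hAm : ∀ i j, (Fintype.card V : ℝ)⁻¹ ≤ (A ^ m) i j) :
    1 / (2 * m) ≤ phiDS A := by
  refine le_phiDS hV fun S hS h2S => ?_
  have hSpos : (0 : ℝ) < #S := by exact_mod_cast hS.card_pos
  have hVpos : (0 : ℝ) < Fintype.card V := by exact_mod_cast (by omega : 0 < Fintype.card V)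
  have hcompl : (Fintype.card V : ℝ) ≤ 2 * #Sᶜ := by
    have := card_add_card_compl S
    exact_mod_cast (by omega : Fintype.card V ≤ 2 * #Sᶜ)
  have key : #S / 2 ≤ m * cut A S := calc
    (#S / 2 : ℝ) = (Fintype.card V : ℝ)⁻¹ * #S * (Fintype.card V / 2) := by field_simp
    _ ≤ (Fintype.card V : ℝ)⁻¹ * #S * #Sᶜ := by gcongr; linarith
    _ ≤ cut (A ^ m) S := mul_card_mul_card_le_cut hAm S
    _ ≤ m * cut A S := cut_pow_le hA S m
  have hm : (0 : ℝ) < m := by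
    by_contra! h
    have := mul_nonpos_of_nonpos_of_nonneg h (cut_nonneg (mem_doublyStochastic.1 hA).1 S)
    linarith
  rw [div_le_div_iff₀ (by positivity) hSpos]
  linarith

end Cut

/-- `y` is `x` moved `m` places towards the higher indices, with arbitrary bits entering at the
bottom. An `abbrev`, so that `if Shifted 1 x y` uses the same `Decidable` instance as the
statement's `if`. -/
abbrev Shifted {k : ℕ} (m : ℕ) (x y : Fin k → Bool) : Prop :=
  ∀ i j : Fin k, (i : ℕ) = j + m → x j = y i

noncomputable def deBruijn (k : ℕ) : Matrix (Fin k → Bool) (Fin k → Bool) ℝ :=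
  of fun x y => if Shifted 1 x y then 1 / 2 else 0

variable {k : ℕ}

lemma deBruijn_nonneg (x y : Fin k → Bool) : 0 ≤ deBruijn k x y := by
  simp only [deBruijn, of_apply]
  split_ifs <;> norm_num

lemma Shifted.rev {x y : Fin k → Bool} (h : Shifted 1 x y) :
    Shifted 1 (y ∘ Fin.rev) (x ∘ Fin.rev) := fun i j hij =>
  (h (Fin.rev j) (Fin.rev i) (by simp only [Fin.val_rev]; omega)).symm

lemma shifted_one_iff {x y : Fin k → Bool} (hk : 0 < k) :
    Shifted 1 x y ↔ ∀ i ∈ ({⟨0, hk⟩}ᶜ : Finset (Fin k)), y i = x ⟨i - 1, by omega⟩ := by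
  simp only [mem_compl, mem_singleton, Fin.ext_iff]
  refine ⟨fun h i hi => (h i _ (by simp only; omega)).symm, fun h i j hij => ?_⟩
  rw [h i (by omega)]
  exact congrArg x (Fin.ext (by simp only; omega))

lemma deBruijn_mem_doublyStochastic (hk : 0 < k) : deBruijn k ∈ doublyStochastic ℝ _ := by
  have hrow : ∀ x, ∑ y, deBruijn k x y = 1 := fun x => by
    simp only [deBruijn, of_apply, sum_ite, sum_const_zero, add_zero, sum_const, nsmul_eq_mul]
    rw [filter_congr fun y _ => shifted_one_iff hk, card_filter_forall_mem_eq, card_compl]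
    simp [Nat.sub_sub_self hk]
  -- reversing and swapping the two strings preserves adjacency, so column sums are row sums
  have hrev : ∀ x y, deBruijn k x y = deBruijn k (y ∘ Fin.rev) (x ∘ Fin.rev) := fun x y => by
    have : Shifted 1 x y ↔ Shifted 1 (y ∘ Fin.rev) (x ∘ Fin.rev) :=
      ⟨Shifted.rev, fun h => by simpa [Function.comp_def] using h.rev⟩
    simp only [deBruijn, of_apply, this]
  let e : (Fin k → Bool) ≃ (Fin k → Bool) :=
    Function.Involutive.toPerm (· ∘ Fin.rev) fun x => by ext; simp
  refine mem_doublyStochastic_iff_sum.2 ⟨deBruijn_nonneg, hrow, fun y => ?_⟩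
  simp_rw [hrev _ y]
  exact (e.sum_comp (deBruijn k (y ∘ Fin.rev))).trans (hrow _)

lemma le_deBruijn_pow_apply {m : ℕ} {x y : Fin k → Bool} (h : Shifted m x y) :
    (1 / 2 : ℝ) ^ m ≤ (deBruijn k ^ m) x y := by
  induction m generalizing x with
  | zero =>
    obtain rfl : x = y := funext fun i => h i i rfl
    simp
  | succ m ih =>
    let z : Fin k → Bool := fun j =>
      if h1 : 0 < (j : ℕ) then x ⟨j - 1, by omega⟩
      else if h2 : (j : ℕ) + m < k then y ⟨j + m, h2⟩ else false
    have hxz : deBruijn k x z = 1 / 2 := if_pos fun i j hij => by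
      simp only [z, dif_pos (show 0 < (i : ℕ) by omega)]
      exact congrArg x (Fin.ext (by simp only; omega))
    have hzy : Shifted m z y := fun i j hij => by
      by_cases hj : 0 < (j : ℕ)
      · simp only [z, dif_pos hj]
        exact h i _ (by simp only; omega)
      · simp only [z, dif_neg hj, dif_pos (show (j : ℕ) + m < k by omega)]
        exact congrArg y (Fin.ext (by simp only; omega))
    calc (1 / 2 : ℝ) ^ (m + 1) = deBruijn k x z * (1 / 2) ^ m := by rw [hxz, pow_succ']
      _ ≤ deBruijn k x z * (deBruijn k ^ m) z y := by gcongr; exact ih hzy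
      _ ≤ (deBruijn k ^ (m + 1)) x y := by
        rw [pow_succ', mul_apply]
        exact single_le_sum (f := fun l => deBruijn k x l * (deBruijn k ^ m) l y)
          (fun l _ => mul_nonneg (deBruijn_nonneg x l) (pow_apply_nonneg deBruijn_nonneg m l y))
          (mem_univ z)

def finIco (k p q : ℕ) : Finset (Fin k) := {i | p ≤ (i : ℕ) ∧ (i : ℕ) < q}

def runAt (k m p : ℕ) : Finset (Fin k → Bool) := {x | ∀ i ∈ finIco k p (p + m), x i = true}

def runSet (k m : ℕ) : Finset (Fin k → Bool) := (range (k + 1 - m)).biUnion (runAt k m)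

/-- A zero at position `p - 1` followed by `m` ones. -/
def runAfterZero (k m p : ℕ) : Finset (Fin k → Bool) :=
  {x | ∀ i ∈ finIco k (p - 1) (p + m), x i = decide (p ≤ (i : ℕ))}

variable {m p q : ℕ}

@[simp]
lemma mem_finIco {i : Fin k} : i ∈ finIco k p q ↔ p ≤ (i : ℕ) ∧ (i : ℕ) < q := by
  simp [finIco]

lemma card_finIco (hq : q ≤ k) : #(finIco k p q) = q - p := by
  rw [← card_map Fin.valEmbedding, ← Nat.card_Ico]
  congr 1
  ext v
  simp only [mem_map, mem_finIco, Fin.valEmbedding_apply, mem_Ico]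
  exact ⟨fun ⟨i, hi, hv⟩ => hv ▸ hi, fun hv => ⟨⟨v, by omega⟩, hv, rfl⟩⟩

lemma card_runAt (h : p + m ≤ k) : #(runAt k m p) = 2 ^ (k - m) := by
  rw [runAt, card_filter_forall_mem_eq, card_finIco h]
  simp

lemma card_runAfterZero (h : p + m ≤ k) (hp : 1 ≤ p) :
    #(runAfterZero k m p) = 2 ^ (k - m - 1) := by
  rw [runAfterZero, card_filter_forall_mem_eq, card_finIco h]
  simp only [Fintype.card_bool, Fintype.card_fin]
  congr 1
  omega

lemma card_runSet_le : #(runSet k m) ≤ (k + 1 - m) * 2 ^ (k - m) :=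
  card_biUnion_le.trans <| (sum_le_card_nsmul _ _ _ fun p hp =>
    (card_runAt (by have := mem_range.1 hp; omega)).le).trans (by simp)

lemma runAfterZero_subset_runSet (h : p + m ≤ k) : runAfterZero k m p ⊆ runSet k m := by
  intro x hx
  simp only [runAfterZero, mem_filter, mem_univ, true_and, mem_finIco] at hx
  simp only [runSet, runAt, mem_biUnion, mem_range, mem_filter, mem_univ, true_and, mem_finIco]
  exact ⟨p, by omega, fun i hi => by simpa [hi.1] using hx i ⟨by omega, hi.2⟩⟩

lemma disjoint_runAfterZero (hpq : p < q) (hq : q ≤ p + m) (hqk : q ≤ k) :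
    Disjoint (runAfterZero k m p) (runAfterZero k m q) := by
  refine disjoint_left.2 fun x hp hq' => ?_
  simp only [runAfterZero, mem_filter, mem_univ, true_and, mem_finIco] at hp hq'
  have h1 := hp ⟨q - 1, by omega⟩ ⟨by simp only; omega, by simp only; omega⟩
  have h2 := hq' ⟨q - 1, by omega⟩ ⟨by simp only; omega, by simp only; omega⟩
  simp only [h1, decide_eq_decide] at h2
  omega

lemma mul_le_card_runSet (hkm : k ≤ 2 * m) : (k - m) * 2 ^ (k - m - 1) ≤ #(runSet k m) := by
  calc (k - m) * 2 ^ (k - m - 1) = ∑ p ∈ Icc 1 (k - m), #(runAfterZero k m p) := by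
        rw [sum_congr rfl fun p hp =>
          have := mem_Icc.1 hp; card_runAfterZero (by omega) (by omega)]
        simp
    _ = #((Icc 1 (k - m)).biUnion (runAfterZero k m)) := by
        refine (card_biUnion fun p hp q hq hpq => ?_).symm
        simp only [coe_Icc, Set.mem_Icc] at hp hq
        rcases lt_or_gt_of_ne hpq with h | h
        · exact disjoint_runAfterZero h (by omega) (by omega)
        · exact (disjoint_runAfterZero h (by omega) (by omega)).symm
    _ ≤ #(runSet k m) :=
        card_le_card <| biUnion_subset.2 fun p hp =>
          runAfterZero_subset_runSet (by have := mem_Icc.1 hp; omega)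

lemma Shifted.mem_runAt_succ {x y : Fin k → Bool} (hxy : Shifted 1 x y)
    (hx : x ∈ runAt k m p) : y ∈ runAt k m (p + 1) := by
  simp only [runAt, mem_filter, mem_univ, true_and, mem_finIco] at hx ⊢
  intro i hi
  rw [← hxy i ⟨i - 1, by omega⟩ (by simp only; omega)]
  exact hx _ ⟨by simp only; omega, by simp only; omega⟩

lemma Shifted.mem_runAfterZero {x y : Fin k → Bool} (hxy : Shifted 1 x y) (hx : x ∈ runSet k m)
    (hy : y ∉ runSet k m) (hm : m < k) : x ∈ runAfterZero k m (k - m) := by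
  have hy' : ∀ p, p + m < k → x ∉ runAt k m p := fun p hp hxp =>
    hy (mem_biUnion.2 ⟨p + 1, mem_range.2 (by omega), hxy.mem_runAt_succ hxp⟩)
  obtain ⟨p, hp, hxp⟩ := mem_biUnion.1 hx
  obtain rfl : p = k - m := by
    by_contra hne
    exact hy' p (by have := mem_range.1 hp; omega) hxp
  simp only [runAt, runAfterZero, mem_filter, mem_univ, true_and, mem_finIco] at hxp ⊢
  intro i hi
  by_cases hik : k - m ≤ (i : ℕ)
  · simpa [hik] using hxp i ⟨hik, by omega⟩
  rw [decide_eq_false hik, ← Bool.not_eq_true]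
  intro hxi
  refine hy' (k - m - 1) (by omega) ?_
  simp only [runAt, mem_filter, mem_univ, true_and, mem_finIco]
  intro j hj
  obtain rfl | hji := eq_or_ne j i
  · exact hxi
  · exact hxp j ⟨by rw [← Fin.val_ne_iff] at hji; omega, by omega⟩

lemma cut_deBruijn_runSet_le (hm : m < k) :
    cut (deBruijn k) (runSet k m) ≤ 2 ^ (k - m - 1) := by
  refine (cut_le_card_inter (deBruijn_mem_doublyStochastic (by omega))
    (X := runAfterZero k m (k - m)) fun x hx hxX y hy => if_neg fun hxy =>
      hxX (hxy.mem_runAfterZero hx hy hm)).trans ?_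
  exact_mod_cast (card_le_card inter_subset_right).trans
    (card_runAfterZero (by omega) (by omega)).le

lemma two_mul_succ_le_two_pow {n : ℕ} (hn : 3 ≤ n) : 2 * (n + 1) ≤ 2 ^ n := by
  induction n, hn using Nat.le_induction with
  | base => norm_num
  | succ n _ ih => rw [pow_succ]; omega

lemma phiDS_deBruijn_add_le {a : ℕ} (ha : 1 ≤ a) (ham : a ≤ m) (hm : 3 ≤ m) :
    phiDS (deBruijn (a + m)) ≤ 1 / a := by
  set S := runSet (a + m) m
  have hA := deBruijn_mem_doublyStochastic (by omega : 0 < a + m)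
  have hlow : a * 2 ^ (a - 1) ≤ #S := by simpa using mul_le_card_runSet (k := a + m) (m := m) (by omega)
  have hcut : cut (deBruijn (a + m)) S ≤ 2 ^ (a - 1) := by
    simpa using cut_deBruijn_runSet_le (k := a + m) (m := m) (by omega)
  have hS : S.Nonempty := card_pos.1 ((Nat.mul_pos (by omega) (by positivity)).trans_le hlow)
  have h2S : 2 * #S ≤ Fintype.card (Fin (a + m) → Bool) := calc
    2 * #S ≤ 2 * ((a + 1) * 2 ^ a) := by
      simpa [show a + m + 1 - m = a + 1 by omega] using
        Nat.mul_le_mul_left 2 (card_runSet_le (k := a + m) (m := m))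
    _ ≤ 2 * (m + 1) * 2 ^ a := by rw [← mul_assoc]; gcongr
    _ ≤ 2 ^ m * 2 ^ a := by gcongr; exact two_mul_succ_le_two_pow hm
    _ = Fintype.card (Fin (a + m) → Bool) := by rw [← pow_add, add_comm]; simp
  calc phiDS (deBruijn (a + m)) ≤ cut (deBruijn (a + m)) S / #S :=
        phiDS_le (mem_doublyStochastic.1 hA).1 hS h2S
    _ ≤ 2 ^ (a - 1) / (a * 2 ^ (a - 1)) := by
        gcongr
        exact_mod_cast hlow
    _ = 1 / a := by field_simp

lemma phiDS_deBruijn_le (hk : 5 ≤ k) : phiDS (deBruijn k) ≤ 8 / k := by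
  have h := phiDS_deBruijn_add_le (a := k / 2) (m := k - k / 2) (by omega) (by omega) (by omega)
  rw [Nat.add_sub_cancel' (Nat.div_le_self k 2)] at h
  refine h.trans ?_
  rw [div_le_div_iff₀ (by exact_mod_cast (by omega : 0 < k / 2)) (by positivity), one_mul]
  exact_mod_cast (by omega : k ≤ 8 * (k / 2))

/-- edge expansion of the de Bruijn matrix on `n = 2^k` vertices is `Θ(1/log₂ n)`. -/
theorem stmt_15 (k : ℕ) (hk : 0 < k)
    (A : Matrix (Fin k → Bool) (Fin k → Bool) ℝ)
    (hAdef : ∀ x y : Fin k → Bool,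
      A x y = if (∀ i j : Fin k, (i : ℕ) = (j : ℕ) + 1 → x j = y i) then (1 / 2 : ℝ) else 0) :
    1 / (2 * (k : ℝ)) ≤ phiDS A ∧ phiDS A ≤ 8 / (k : ℝ) := by
  obtain rfl : A = deBruijn k := Matrix.ext hAdef
  have hA := deBruijn_mem_doublyStochastic hk
  have hV : 2 ≤ Fintype.card (Fin k → Bool) := by
    simpa using Nat.pow_le_pow_right (n := 2) (by norm_num) hk
  refine ⟨one_div_two_mul_le_phiDS_of_pow hA hV fun x y => ?_, ?_⟩
  · simpa using le_deBruijn_pow_apply (m := k) (x := x) (y := y) fun i j hij => by omega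
  · rcases le_or_gt k 8 with hk8 | hk8
    · refine (phiDS_le_one hA hV).trans ?_
      rw [le_div_iff₀ (by positivity), one_mul]
      exact_mod_cast (by omega : k ≤ 8)
    · exact phiDS_deBruijn_le (by omega)
end

section
/- Let A be a 1/2-lazy (A_{ii} ≥ 1/2 for all i) irreducible nonnegative matrix with largest eigenvalue 1 and a common positive left-and-right eigenvector w. Then λ₂(AAᵀ) ≤ λ₂((A + Aᵀ)/2). -/
/-!
Put `B = 2A - 1`. Laziness makes `B` nonnegative, and `B` fixes `w` on both sides, so by a weighted
Cauchy–Schwarz inequality `B` and `Bᵀ` are contractions of `ℓ²`. Expanding `‖Bᵀx‖² ≤ ‖x‖²` gives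
`‖Aᵀx‖² ≤ ⟪x, Aᵀx⟫`: the quadratic form of `AAᵀ` is dominated by that of `(A + Aᵀ)/2` at every `x`,
and taking suprema over unit vectors orthogonal to `w` compares the second eigenvalues.
-/

open Matrix Finset

/-- The second largest eigenvalue of a symmetric matrix whose top eigenvector is `w`:
the supremum of the Rayleigh quotient over unit vectors orthogonal to `w`. -/
noncomputable def lam2 {n : ℕ} (M : Matrix (Fin n) (Fin n) ℝ) (w : Fin n → ℝ) : ℝ :=
  sSup {r : ℝ | ∃ x : Fin n → ℝ, x ⬝ᵥ w = 0 ∧ x ⬝ᵥ x = 1 ∧ r = x ⬝ᵥ M.mulVec x}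

namespace Matrix

variable {ι : Type*} [Fintype ι]

structure IsDoublyStochasticWrt (B : Matrix ι ι ℝ) (w : ι → ℝ) : Prop where
  nonneg : ∀ i j, 0 ≤ B i j
  mulVec_eq : B *ᵥ w = w
  vecMul_eq : w ᵥ* B = w

namespace IsDoublyStochasticWrt

variable {B : Matrix ι ι ℝ} {w : ι → ℝ}

theorem transpose (hB : B.IsDoublyStochasticWrt w) : Bᵀ.IsDoublyStochasticWrt w where
  nonneg i j := hB.nonneg j i
  mulVec_eq := by rw [mulVec_transpose, hB.vecMul_eq]
  vecMul_eq := by rw [vecMul_transpose, hB.mulVec_eq]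

theorem two_smul_sub_one [DecidableEq ι] (hB : B.IsDoublyStochasticWrt w)
    (hlazy : ∀ i, 1 / 2 ≤ B i i) : ((2 : ℝ) • B - 1).IsDoublyStochasticWrt w where
  nonneg i j := by
    rcases eq_or_ne i j with rfl | hij
    · simp only [sub_apply, smul_apply, one_apply_eq, smul_eq_mul]
      linarith [hlazy i]
    · simpa [one_apply_ne hij] using hB.nonneg i j
  mulVec_eq := by
    rw [sub_mulVec, smul_mulVec, hB.mulVec_eq, one_mulVec, two_smul, add_sub_cancel_right]
  vecMul_eq := by
    rw [vecMul_sub, vecMul_smul, hB.vecMul_eq, vecMul_one, two_smul, add_sub_cancel_right]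

/-- Row by row this is the weighted Cauchy–Schwarz inequality
`(∑ⱼ Bᵢⱼ xⱼ)² ≤ (∑ⱼ Bᵢⱼ wⱼ) (∑ⱼ Bᵢⱼ xⱼ² / wⱼ)`; summing over `i` uses `wᵀ B = wᵀ`. -/
theorem mulVec_dotProduct_mulVec_le (hB : B.IsDoublyStochasticWrt w) (hw : ∀ i, 0 < w i)
    (x : ι → ℝ) : B *ᵥ x ⬝ᵥ B *ᵥ x ≤ x ⬝ᵥ x := by
  have row (i : ι) : (B *ᵥ x) i ^ 2 ≤ w i * ∑ j, B i j * (x j ^ 2 / w j) := by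
    calc (B *ᵥ x) i ^ 2 = (∑ j, B i j * x j) ^ 2 := rfl
      _ ≤ (∑ j, B i j * w j) * ∑ j, B i j * (x j ^ 2 / w j) :=
        sum_sq_le_sum_mul_sum_of_sq_le_mul _
          (fun j _ => mul_nonneg (hB.nonneg i j) (hw j).le)
          (fun j _ => mul_nonneg (hB.nonneg i j) (div_nonneg (sq_nonneg _) (hw j).le))
          (fun j _ => by field_simp [(hw j).ne']; exact le_rfl)
      _ = w i * ∑ j, B i j * (x j ^ 2 / w j) := by
        rw [← congrFun hB.mulVec_eq i]; rfl
  calc B *ᵥ x ⬝ᵥ B *ᵥ x = ∑ i, (B *ᵥ x) i ^ 2 := by simp only [dotProduct, sq]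
    _ ≤ ∑ i, w i * ∑ j, B i j * (x j ^ 2 / w j) := sum_le_sum fun i _ => row i
    _ = ∑ j, (w ᵥ* B) j * (x j ^ 2 / w j) := by
      simp only [mul_sum, vecMul, dotProduct, sum_mul, mul_assoc]
      exact sum_comm
    _ = x ⬝ᵥ x := by
      rw [hB.vecMul_eq, dotProduct]
      exact sum_congr rfl fun j _ => by field_simp [(hw j).ne']

theorem dotProduct_mulVec_le (hB : B.IsDoublyStochasticWrt w) (hw : ∀ i, 0 < w i)
    (x : ι → ℝ) : x ⬝ᵥ B *ᵥ x ≤ x ⬝ᵥ x := by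
  have hcontract := hB.mulVec_dotProduct_mulVec_le hw x
  have hsq : 0 ≤ (x - B *ᵥ x) ⬝ᵥ (x - B *ᵥ x) := Fintype.sum_nonneg fun i => mul_self_nonneg _
  simp only [sub_dotProduct, dotProduct_sub, dotProduct_comm (B *ᵥ x) x] at hsq
  linarith

end IsDoublyStochasticWrt

theorem dotProduct_half_smul_add_transpose_mulVec (A : Matrix ι ι ℝ) (x : ι → ℝ) :
    x ⬝ᵥ ((1 / 2 : ℝ) • (A + Aᵀ)) *ᵥ x = x ⬝ᵥ Aᵀ *ᵥ x := by
  rw [smul_mulVec, add_mulVec, dotProduct_smul, dotProduct_add, dotProduct_mulVec x A,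
    ← mulVec_transpose, dotProduct_comm, smul_eq_mul]
  ring

end Matrix

theorem lam2_mono {n : ℕ} {M N : Matrix (Fin n) (Fin n) ℝ} (w : Fin n → ℝ)
    (hle : ∀ x, x ⬝ᵥ M *ᵥ x ≤ x ⬝ᵥ N *ᵥ x)
    (hN : BddAbove {r : ℝ | ∃ x : Fin n → ℝ, x ⬝ᵥ w = 0 ∧ x ⬝ᵥ x = 1 ∧ r = x ⬝ᵥ N *ᵥ x}) :
    lam2 M w ≤ lam2 N w := by
  rcases em (∃ x : Fin n → ℝ, x ⬝ᵥ w = 0 ∧ x ⬝ᵥ x = 1) with ⟨x₀, hx₀w, hx₀⟩ | hempty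
  · refine csSup_le ⟨_, x₀, hx₀w, hx₀, rfl⟩ ?_
    rintro _ ⟨x, hxw, hx, rfl⟩
    exact (hle x).trans (le_csSup hN ⟨x, hxw, hx, rfl⟩)
  · have hS (P : Matrix (Fin n) (Fin n) ℝ) :
        {r : ℝ | ∃ x : Fin n → ℝ, x ⬝ᵥ w = 0 ∧ x ⬝ᵥ x = 1 ∧ r = x ⬝ᵥ P *ᵥ x} = ∅ :=
      Set.eq_empty_of_forall_notMem fun _ ⟨x, hxw, hx, _⟩ => hempty ⟨x, hxw, hx⟩
    rw [lam2, lam2, hS, hS]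

theorem stmt_16_general {n : ℕ} (A : Matrix (Fin n) (Fin n) ℝ)
    (hA : ∀ i j, 0 ≤ A i j)
    (hlazy : ∀ i, (1 / 2 : ℝ) ≤ A i i)
    (w : Fin n → ℝ) (hw : ∀ i, 0 < w i)
    (hAw : A.mulVec w = w) (hwA : A.vecMul w = w) :
    lam2 (A * Aᵀ) w ≤ lam2 ((1 / 2 : ℝ) • (A + Aᵀ)) w := by
  have hAt : Aᵀ.IsDoublyStochasticWrt w := (⟨hA, hAw, hwA⟩ : A.IsDoublyStochasticWrt w).transpose
  have hBt : ((2 : ℝ) • Aᵀ - 1).IsDoublyStochasticWrt w := hAt.two_smul_sub_one hlazy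
  refine lam2_mono w (fun x => ?_) ⟨1, ?_⟩
  · have := hBt.mulVec_dotProduct_mulVec_le hw x
    simp only [sub_mulVec, smul_mulVec, one_mulVec, sub_dotProduct, dotProduct_sub,
      smul_dotProduct, dotProduct_smul, smul_eq_mul, dotProduct_comm (Aᵀ *ᵥ x) x] at this
    rw [dotProduct_half_smul_add_transpose_mulVec, ← mulVec_mulVec, dotProduct_mulVec,
      ← mulVec_transpose]
    linarith
  · rintro _ ⟨x, -, hx, rfl⟩
    rw [dotProduct_half_smul_add_transpose_mulVec, ← hx]
    exact hAt.dotProduct_mulVec_le hw x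

/-- Fill's lemma -/
theorem stmt_16 {n : ℕ} (A : Matrix (Fin n) (Fin n) ℝ)
    (hA : ∀ i j, 0 ≤ A i j)
    (hlazy : ∀ i, (1 / 2 : ℝ) ≤ A i i)
    (hirr : ∀ s t : Fin n, ∃ k : ℕ, 0 < k ∧ 0 < (A ^ k) s t)
    (w : Fin n → ℝ) (hw : ∀ i, 0 < w i)
    (hAw : A.mulVec w = w) (hwA : A.vecMul w = w) :
    lam2 (A * Aᵀ) w ≤ lam2 ((1 / 2 : ℝ) • (A + Aᵀ)) w :=
  stmt_16_general A hA hlazy w hw hAw hwA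
end

section
/- Let R ∈ ℂ^{n×n} be such that (R + R*)/2 is positive definite. Then R is invertible, (R⁻¹ + (R*)⁻¹)/2 is positive definite, and ((R + R*)/2)⁻¹ ⪰ (R⁻¹ + (R*)⁻¹)/2 in the Loewner order. -/
/-!
Let `L = (R + Rᴴ)/2`. `R` is invertible because `R v = 0` forces `star v ⬝ᵥ L v = 0`.
Since `R⁻¹ (R + Rᴴ) Rᴴ⁻¹ = Rᴴ⁻¹ + R⁻¹`, the matrix `(R⁻¹ + Rᴴ⁻¹)/2` equals the congruence
`R⁻¹ L R⁻¹ᴴ` of `L`, hence is positive definite. Expanding `X L⁻¹ Xᴴ` for `X = 1 - R⁻¹ L` gives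
`L⁻¹ - R⁻¹ - Rᴴ⁻¹ + R⁻¹ L Rᴴ⁻¹ = L⁻¹ - (R⁻¹ + Rᴴ⁻¹)/2`, which is therefore positive semidefinite.
-/

open Matrix
open scoped ComplexOrder

namespace Matrix

variable {ι K : Type*} [Fintype ι] [DecidableEq ι] [Field K]

theorem inv_mul_smul_add_mul_inv {A B : Matrix ι ι K} (hA : IsUnit A) (hB : IsUnit B) (c : K) :
    A⁻¹ * (c • (A + B)) * B⁻¹ = c • (A⁻¹ + B⁻¹) := by
  rw [inv_add_inv (iff_of_true hA hB), Matrix.mul_smul, Matrix.smul_mul]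

theorem inv_sub_half_smul_inv_add_inv [NeZero (2 : K)] {A B : Matrix ι ι K}
    (hA : IsUnit A) (hB : IsUnit B) (hL : IsUnit ((1 / 2 : K) • (A + B))) :
    ((1 / 2 : K) • (A + B))⁻¹ - (1 / 2 : K) • (A⁻¹ + B⁻¹) =
      (1 - A⁻¹ * ((1 / 2 : K) • (A + B))) * ((1 / 2 : K) • (A + B))⁻¹ *
        (1 - (1 / 2 : K) • (A + B) * B⁻¹) := by
  set L := (1 / 2 : K) • (A + B)
  have hL' := (isUnit_iff_isUnit_det L).1 hL
  have hexpand : (1 - A⁻¹ * L) * L⁻¹ * (1 - L * B⁻¹) = L⁻¹ - A⁻¹ - B⁻¹ + A⁻¹ * L * B⁻¹ := by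
    simp only [sub_mul, mul_sub, one_mul, mul_one, Matrix.mul_assoc, mul_nonsing_inv _ hL',
      nonsing_inv_mul_cancel_left _ _ hL']
    abel
  rw [hexpand, inv_mul_smul_add_mul_inv hA hB]
  linear_combination (norm := module) sub_half (1 : K) • (A⁻¹ + B⁻¹)

variable [StarRing K] [PartialOrder K]

theorem isUnit_of_posDef_smul_add_conjTranspose {R : Matrix ι ι K} {c : K}
    (h : (c • (R + Rᴴ)).PosDef) : IsUnit R := by
  rw [isUnit_iff_isUnit_det, isUnit_iff_ne_zero]
  intro hdet
  obtain ⟨v, hv, hRv⟩ := exists_mulVec_eq_zero_iff.2 hdet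
  have hRHv : star v ⬝ᵥ (Rᴴ *ᵥ v) = 0 := by
    rw [dotProduct_mulVec, ← star_mulVec, hRv, star_zero, zero_dotProduct]
  have hpos := h.dotProduct_mulVec_pos hv
  simp [add_mulVec, smul_mulVec, hRv, hRHv] at hpos

theorem posDef_smul_inv_add_inv_conjTranspose {R : Matrix ι ι K} {c : K}
    (h : (c • (R + Rᴴ)).PosDef) : (c • (R⁻¹ + Rᴴ⁻¹)).PosDef := by
  have hR := isUnit_of_posDef_smul_add_conjTranspose h
  rw [← inv_mul_smul_add_mul_inv hR ((isUnit_conjTranspose R).2 hR), ← conjTranspose_nonsing_inv]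
  exact (IsUnit.posDef_star_right_conjugate_iff (isUnit_nonsing_inv_iff.2 hR)).2 h

theorem posSemidef_inv_sub_half_smul_inv_add_inv_conjTranspose [NeZero (2 : K)]
    {R : Matrix ι ι K} (h : ((1 / 2 : K) • (R + Rᴴ)).PosDef) :
    (((1 / 2 : K) • (R + Rᴴ))⁻¹ - (1 / 2 : K) • (R⁻¹ + Rᴴ⁻¹)).PosSemidef := by
  have hR := isUnit_of_posDef_smul_add_conjTranspose h
  rw [inv_sub_half_smul_inv_add_inv hR ((isUnit_conjTranspose R).2 hR) h.isUnit]
  convert h.inv.posSemidef.mul_mul_conjTranspose_same (1 - R⁻¹ * ((1 / 2 : K) • (R + Rᴴ))) using 2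
  rw [conjTranspose_sub, conjTranspose_one, conjTranspose_mul, h.isHermitian.eq,
    conjTranspose_nonsing_inv]

end Matrix

theorem stmt_17 {n : ℕ} (R : Matrix (Fin n) (Fin n) ℂ)
    (hL : (((1 : ℂ) / 2) • (R + Rᴴ)).PosDef) :
    IsUnit R ∧
    (((1 : ℂ) / 2) • (R⁻¹ + (Rᴴ)⁻¹)).PosDef ∧
    ((((1 : ℂ) / 2) • (R + Rᴴ))⁻¹ - ((1 : ℂ) / 2) • (R⁻¹ + (Rᴴ)⁻¹)).PosSemidef :=
  ⟨isUnit_of_posDef_smul_add_conjTranspose hL, posDef_smul_inv_add_inv_conjTranspose hL,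
    posSemidef_inv_sub_half_smul_inv_add_inv_conjTranspose hL⟩
end

section
/- Let R ∈ ℂ^{n×n} with L = (R + R*)/2 positive definite and Q = (R − R*)/2. Define W_α = L + αQ for real α. Then for all real α, β with |α| ≤ |β| ≤ 1: (W_α⁻¹ + (W_α*)⁻¹)/2 ⪰ (W_β⁻¹ + (W_β*)⁻¹)/2 in the Loewner order. -/
open Matrix
open scoped ComplexOrder

/-!
For `W = L + cQ` with `L` Hermitian and `Q` skew-Hermitian, `W + Wᴴ = 2L` gives
`(W⁻¹ + Wᴴ⁻¹)/2 = W⁻¹ L Wᴴ⁻¹ = (Wᴴ L⁻¹ W)⁻¹`, and the cross terms of `Wᴴ L⁻¹ W` cancel, leaving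
`L + c² Qᴴ L⁻¹ Q`. This is Loewner-increasing in `c²` because `Qᴴ L⁻¹ Q ⪰ 0`, and inversion is
Loewner-antitone on positive definite matrices.
-/

namespace Matrix
variable {n : Type*} [Fintype n] [DecidableEq n]

open scoped MatrixOrder Matrix.Norms.L2Operator in
theorem PosDef.posSemidef_inv_sub_inv {A B : Matrix n n ℂ} (hA : A.PosDef)
    (hAB : (B - A).PosSemidef) : (A⁻¹ - B⁻¹).PosSemidef := by
  have hB : B.PosDef := by simpa using hA.add_posSemidef hAB
  simpa [le_iff] using CStarAlgebra.inv_le_inv (a := hA.isUnit.unit) (b := hB.isUnit.unit)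
    (nonneg_iff_posSemidef.mpr hA.posSemidef) hAB

variable {𝕜 : Type*} [RCLike 𝕜]

theorem conjTranspose_mul_inv_mul_eq_of_skew {L Q : Matrix n n 𝕜} (hLh : Lᴴ = L)
    (hQ : Qᴴ = -Q) (hL : IsUnit L.det) (c : ℝ) :
    (L + (c : 𝕜) • Q)ᴴ * L⁻¹ * (L + (c : 𝕜) • Q) = L + c ^ 2 • (Qᴴ * L⁻¹ * Q) := by
  have hLL : L * L⁻¹ = 1 := mul_nonsing_inv L hL
  have hLL' : L⁻¹ * L = 1 := nonsing_inv_mul L hL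
  rw [conjTranspose_add, conjTranspose_smul, hLh, hQ, RCLike.star_def, RCLike.conj_ofReal]
  simp only [add_mul, mul_add, Matrix.smul_mul, Matrix.mul_smul, smul_neg, Matrix.neg_mul,
    hLL, hLL', one_mul, mul_one, smul_smul, Matrix.mul_assoc]
  rw [RCLike.real_smul_eq_coe_smul (K := 𝕜)]
  push_cast
  module

theorem half_smul_inv_add_inv_conjTranspose {W L : Matrix n n 𝕜} (hW : IsUnit W.det)
    (hL : IsUnit L.det) (hWL : W + Wᴴ = (2 : 𝕜) • L) :
    ((1 : 𝕜) / 2) • (W⁻¹ + (Wᴴ)⁻¹) = (Wᴴ * L⁻¹ * W)⁻¹ := by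
  have hWh : IsUnit Wᴴ.det := by rwa [det_conjTranspose, isUnit_star]
  calc ((1 : 𝕜) / 2) • (W⁻¹ + (Wᴴ)⁻¹) = ((1 : 𝕜) / 2) • (W⁻¹ * (W + Wᴴ) * (Wᴴ)⁻¹) := by
        rw [mul_add, add_mul, nonsing_inv_mul W hW, one_mul, Matrix.mul_assoc,
          mul_nonsing_inv _ hWh, mul_one, add_comm]
    _ = (Wᴴ * L⁻¹ * W)⁻¹ := by
        rw [hWL, Matrix.mul_inv_rev, Matrix.mul_inv_rev, nonsing_inv_nonsing_inv L hL]
        rw [Matrix.mul_smul, Matrix.smul_mul, smul_smul, Matrix.mul_assoc]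
        norm_num

theorem half_smul_inv_add_inv_conjTranspose_of_skew {L Q : Matrix n n 𝕜} (hL : L.PosDef)
    (hQ : Qᴴ = -Q) (c : ℝ) :
    ((1 : 𝕜) / 2) • ((L + (c : 𝕜) • Q)⁻¹ + ((L + (c : 𝕜) • Q)ᴴ)⁻¹)
      = (L + c ^ 2 • (Qᴴ * L⁻¹ * Q))⁻¹ := by
  set W := L + (c : 𝕜) • Q
  have hLh : Lᴴ = L := hL.isHermitian.eq
  have hLdet : IsUnit L.det := (isUnit_iff_isUnit_det L).mp hL.isUnit
  have hN := conjTranspose_mul_inv_mul_eq_of_skew hLh hQ hLdet c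
  have hNpos : (L + c ^ 2 • (Qᴴ * L⁻¹ * Q)).PosDef :=
    hL.add_posSemidef <| (hL.inv.posSemidef.conjTranspose_mul_mul_same Q).smul (sq_nonneg c)
  have hWdet : IsUnit W.det := by
    have h := (isUnit_iff_isUnit_det _).mp hNpos.isUnit
    rw [← hN, det_mul] at h
    exact isUnit_of_mul_isUnit_right h
  have hWW : W + Wᴴ = (2 : 𝕜) • L := by
    rw [conjTranspose_add, conjTranspose_smul, hLh, hQ, RCLike.star_def, RCLike.conj_ofReal]
    module
  rw [half_smul_inv_add_inv_conjTranspose hWdet hLdet hWW, hN]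

end Matrix

theorem stmt_18_general {n : ℕ} (R : Matrix (Fin n) (Fin n) ℂ)
    (L Q : Matrix (Fin n) (Fin n) ℂ)
    (hQdef : Q = ((1 : ℂ) / 2) • (R - Rᴴ))
    (hL : L.PosDef)
    (α β : ℝ) (hαβ : |α| ≤ |β|)
    (Wα Wβ : Matrix (Fin n) (Fin n) ℂ)
    (hWα : Wα = L + (α : ℂ) • Q) (hWβ : Wβ = L + (β : ℂ) • Q) :
    (((1 : ℂ) / 2) • (Wα⁻¹ + (Wαᴴ)⁻¹) - ((1 : ℂ) / 2) • (Wβ⁻¹ + (Wβᴴ)⁻¹)).PosSemidef := by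
  have hQ : Qᴴ = -Q := by
    rw [hQdef, conjTranspose_smul, conjTranspose_sub, conjTranspose_conjTranspose, ← smul_neg,
      neg_sub]
    norm_num
  have hM : (Qᴴ * L⁻¹ * Q).PosSemidef := hL.inv.posSemidef.conjTranspose_mul_mul_same Q
  have hα : ((1 : ℂ) / 2) • (Wα⁻¹ + (Wαᴴ)⁻¹) = (L + α ^ 2 • (Qᴴ * L⁻¹ * Q))⁻¹ := by
    rw [hWα]; exact half_smul_inv_add_inv_conjTranspose_of_skew hL hQ α
  have hβ : ((1 : ℂ) / 2) • (Wβ⁻¹ + (Wβᴴ)⁻¹) = (L + β ^ 2 • (Qᴴ * L⁻¹ * Q))⁻¹ := by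
    rw [hWβ]; exact half_smul_inv_add_inv_conjTranspose_of_skew hL hQ β
  rw [hα, hβ]
  refine (hL.add_posSemidef (hM.smul (sq_nonneg α))).posSemidef_inv_sub_inv ?_
  rw [add_sub_add_left_eq_sub, ← sub_smul]
  exact hM.smul (sub_nonneg.mpr (sq_le_sq.mpr hαβ))

/-- monotonicity of the symmetrized inverse along the pencil `W_α = L + αQ`. -/
theorem stmt_18 {n : ℕ} (R : Matrix (Fin n) (Fin n) ℂ)
    (L Q : Matrix (Fin n) (Fin n) ℂ)
    (hLdef : L = ((1 : ℂ) / 2) • (R + Rᴴ))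
    (hQdef : Q = ((1 : ℂ) / 2) • (R - Rᴴ))
    (hL : L.PosDef)
    (α β : ℝ) (hαβ : |α| ≤ |β|) (hβ : |β| ≤ 1)
    (Wα Wβ : Matrix (Fin n) (Fin n) ℂ)
    (hWα : Wα = L + (α : ℂ) • Q) (hWβ : Wβ = L + (β : ℂ) • Q) :
    (((1 : ℂ) / 2) • (Wα⁻¹ + (Wαᴴ)⁻¹) - ((1 : ℂ) / 2) • (Wβ⁻¹ + (Wβᴴ)⁻¹)).PosSemidef :=
  stmt_18_general R L Q hQdef hL α β hαβ Wα Wβ hWα hWβ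
end

section
/- Let T be an entrywise positive k-tensor in n dimensions that is 2-line stochastic: ∑_i T_{i, j, l₁,…,l_{k−2}} = 1 and ∑_j T_{i, j, l₁,…,l_{k−2}} = 1 for all choices of the remaining indices. Then the uniform distribution p_i = 1/n is the unique probability distribution p satisfying p_i = ∑_{j₁,…,j_{k−1}} T_{i, j₁, …, j_{k−1}} p_{j₁} ⋯ p_{j_{k−1}} for all i. -/
/-!
Contracting all input indices of `T` except the distinguished one against a probability vector
`p` gives the matrix `A_p i j = ∑_l T i j l ∏_t p (l t)`, in terms of which the fixed-point
equation reads `p = A_p *ᵥ p`. Stochasticity of `T` in `j` makes every row of `A_p` sum to one,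
and positivity of `T` makes `A_p` positive. A fixed vector of a positive row-stochastic matrix is
constant (at a maximal entry `i₀`, `∑_j A i₀ j (p i₀ - p j) = 0` is a sum of nonnegative terms),
so `p` is uniform; conversely every constant vector is fixed by a row-stochastic matrix.
-/

open Finset Matrix

section

variable {ι κ : Type*} [Fintype ι] [Fintype κ] [DecidableEq κ]

theorem sum_prod_comp_eq_pow (p : ι → ℝ) :
    ∑ l : κ → ι, ∏ t, p (l t) = (∑ i, p i) ^ Fintype.card κ := by
  rw [← Fintype.prod_sum, prod_const, card_univ]

def contractMatrix (T : ι → ι → (κ → ι) → ℝ) (p : ι → ℝ) : Matrix ι ι ℝ :=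
  of fun i j => ∑ l : κ → ι, T i j l * ∏ t, p (l t)

theorem sum_sum_mul_prod_eq_contractMatrix_mulVec (T : ι → ι → (κ → ι) → ℝ) (p : ι → ℝ) (i : ι) :
    ∑ j, ∑ l : κ → ι, T i j l * p j * ∏ t, p (l t) = (contractMatrix T p *ᵥ p) i := by
  simp only [mulVec, dotProduct, contractMatrix, of_apply, sum_mul]
  exact sum_congr rfl fun j _ => sum_congr rfl fun l _ => by ring

variable {T : ι → ι → (κ → ι) → ℝ}

theorem sum_contractMatrix_row (hT : ∀ i l, ∑ j, T i j l = 1) (p : ι → ℝ) (i : ι) :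
    ∑ j, contractMatrix T p i j = (∑ a, p a) ^ Fintype.card κ := by
  simp only [contractMatrix, of_apply]
  rw [sum_comm]
  simp_rw [← sum_mul, hT, one_mul]
  exact sum_prod_comp_eq_pow p

theorem contractMatrix_pos (hT : ∀ i j l, 0 < T i j l) {p : ι → ℝ} (hp : ∀ i, 0 ≤ p i)
    (hsum : ∑ i, p i = 1) (i j : ι) : 0 < contractMatrix T p i j := by
  have hprod : ∀ l : κ → ι, 0 ≤ ∏ t, p (l t) := fun l => prod_nonneg fun t _ => hp (l t)
  obtain ⟨l₀, -, hl₀⟩ : ∃ l₀ ∈ (univ : Finset (κ → ι)), ∏ t, p (l₀ t) ≠ 0 := by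
    refine exists_ne_zero_of_sum_ne_zero ?_
    rw [sum_prod_comp_eq_pow, hsum, one_pow]
    exact one_ne_zero
  exact sum_pos' (fun l _ => mul_nonneg (hT i j l).le (hprod l))
    ⟨l₀, mem_univ _, mul_pos (hT i j l₀) ((hprod l₀).lt_of_ne' hl₀)⟩

end

namespace Matrix

variable {ι : Type*} [Fintype ι] {A : Matrix ι ι ℝ}

theorem mulVec_const_of_sum_row_eq_one (hrow : ∀ i, ∑ j, A i j = 1) (c : ℝ) :
    A *ᵥ (fun _ => c) = fun _ => c := by
  ext i
  simp [mulVec, dotProduct, ← sum_mul, hrow]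

theorem apply_eq_apply_of_mulVec_eq_self (hA : ∀ i j, 0 < A i j) (hrow : ∀ i, ∑ j, A i j = 1)
    {p : ι → ℝ} (hp : A *ᵥ p = p) (i j : ι) : p i = p j := by
  have : Nonempty ι := ⟨i⟩
  obtain ⟨i₀, hi₀⟩ := Finite.exists_max p
  have hzero : ∑ j, A i₀ j * (p i₀ - p j) = 0 := by
    have hfix : ∑ j, A i₀ j * p j = p i₀ := congrFun hp i₀
    simp only [mul_sub, sum_sub_distrib, ← sum_mul, hrow, one_mul, hfix, sub_self]
  have heq : ∀ j, p j = p i₀ := fun j => by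
    have := (sum_eq_zero_iff_of_nonneg fun j _ =>
      mul_nonneg (hA i₀ j).le (sub_nonneg.2 (hi₀ j))).1 hzero j (mem_univ j)
    linarith [(mul_eq_zero.1 this).resolve_left (hA i₀ j).ne']
  rw [heq i, heq j]

end Matrix

theorem eq_uniform_of_apply_eq_apply {ι : Type*} [Fintype ι] {p : ι → ℝ}
    (hconst : ∀ i j, p i = p j) (hsum : ∑ i, p i = 1) : p = fun _ => 1 / (Fintype.card ι : ℝ) := by
  ext i
  have : Nonempty ι := ⟨i⟩
  have hcard : (Fintype.card ι : ℝ) ≠ 0 := Nat.cast_ne_zero.2 Fintype.card_ne_zero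
  rw [← hsum, sum_congr rfl fun j _ => hconst j i, sum_const, card_univ, nsmul_eq_mul]
  field_simp

theorem stmt_19_general {n m : ℕ}
    (T : Fin n → Fin n → (Fin m → Fin n) → ℝ)
    (hpos : ∀ i j l, 0 < T i j l)
    (hstoch_in : ∀ i l, ∑ j, T i j l = 1) :
    -- the uniform distribution is a fixed point
    (∀ i, (1 : ℝ) / n =
      ∑ j, ∑ l : Fin m → Fin n, T i j l * ((1 : ℝ) / n) * ∏ t : Fin m, ((1 : ℝ) / n)) ∧
    -- and it is the unique fixed point among probability distributions
    (∀ p : Fin n → ℝ, (∀ i, 0 ≤ p i) → ∑ i, p i = 1 →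
      (∀ i, p i = ∑ j, ∑ l : Fin m → Fin n, T i j l * p j * ∏ t : Fin m, p (l t)) →
      p = fun _ => (1 : ℝ) / n) := by
  have hrow (p : Fin n → ℝ) (hsum : ∑ i, p i = 1) (i : Fin n) :
      ∑ j, contractMatrix T p i j = 1 := by
    rw [sum_contractMatrix_row hstoch_in, hsum, one_pow]
  refine ⟨fun i => ?_, fun p hp hsum hfix => ?_⟩
  · have hn : (n : ℝ) ≠ 0 := Nat.cast_ne_zero.2 (Fin.pos i).ne'
    have huniform : ∑ _ : Fin n, (1 : ℝ) / n = 1 := by simp [hn]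
    rw [sum_sum_mul_prod_eq_contractMatrix_mulVec T (fun _ => (1 : ℝ) / n),
      mulVec_const_of_sum_row_eq_one (hrow _ huniform)]
  · have hfix' : contractMatrix T p *ᵥ p = p :=
      funext fun i => (sum_sum_mul_prod_eq_contractMatrix_mulVec T p i).symm.trans (hfix i).symm
    have hconst := apply_eq_apply_of_mulVec_eq_self (contractMatrix_pos hpos hp hsum)
      (hrow p hsum) hfix'
    simpa using eq_uniform_of_apply_eq_apply hconst hsum

/-- a positive 2-line stochastic `(m+2)`-tensor has the uniform distribution as
its unique fixed point. The tensor `T i j l` has output index `i`, a distinguished input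
index `j`, and `m` further input indices `l`. -/
theorem stmt_19 {n m : ℕ} (hn : 0 < n)
    (T : Fin n → Fin n → (Fin m → Fin n) → ℝ)
    (hpos : ∀ i j l, 0 < T i j l)
    (hstoch_out : ∀ j l, ∑ i, T i j l = 1)
    (hstoch_in : ∀ i l, ∑ j, T i j l = 1) :
    -- the uniform distribution is a fixed point
    (∀ i, (1 : ℝ) / n =
      ∑ j, ∑ l : Fin m → Fin n, T i j l * ((1 : ℝ) / n) * ∏ t : Fin m, ((1 : ℝ) / n)) ∧
    -- and it is the unique fixed point among probability distributions
    (∀ p : Fin n → ℝ, (∀ i, 0 ≤ p i) → ∑ i, p i = 1 →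
      (∀ i, p i = ∑ j, ∑ l : Fin m → Fin n, T i j l * p j * ∏ t : Fin m, p (l t)) →
      p = fun _ => (1 : ℝ) / n) :=
  stmt_19_general T hpos hstoch_in
end
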